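/- arXiv:2510.27030 — 12 statements merged into one kernel-verified Lean document; each statement's English description precedes it below -/
import Mathlib

section
/- Let n ≥ 2 and let F be an F-matrix of size 2n−2. Then every row of the associated E-matrix sums to 1; that is, for each 0 ≤ i ≤ 2n−3, the sum over j = 0, …, i of E_{i,j} equals 1. -/
/-- An **F**-matrix of size `2n-2` (for a fully heterochronous ranked tree shape with
`n` leaves), modeled as a function `ℤ → ℤ → ℤ` of nonnegative integer entries that
vanishes outside the index range `0 ≤ j ≤ i ≤ 2n-3`. -/
structure IsFMatrix (n : ℕ) (F : ℤ → ℤ → ℤ) : Prop where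
  nonneg : ∀ i j : ℤ, 0 ≤ F i j
  zero_outside : ∀ i j : ℤ, j < 0 ∨ i < j ∨ 2 * (n : ℤ) - 3 < i → F i j = 0
  row_mono : ∀ i j : ℤ, 1 ≤ j → j ≤ i → i ≤ 2 * (n : ℤ) - 3 → F i (j - 1) ≤ F i j
  col_lb : ∀ i j : ℤ, 0 ≤ j → j < i → i ≤ 2 * (n : ℤ) - 3 → F (i - 1) j - 1 ≤ F i j
  col_ub : ∀ i j : ℤ, 0 ≤ j → j < i → i ≤ 2 * (n : ℤ) - 3 → F i j ≤ F (i - 1) j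
  diag_pos : ∀ i : ℤ, 0 ≤ i → i ≤ 2 * (n : ℤ) - 3 → 0 < F i i
  diag_first : F 0 0 = 2
  diag_step : ∀ i : ℤ, 0 < i → i < 2 * (n : ℤ) - 3 →
      F i i = F (i - 1) (i - 1) + 1 ∨ F i i = F (i - 1) (i - 1) - 1
  diag_last : F (2 * (n : ℤ) - 3) (2 * (n : ℤ) - 3) = 1
  subdiag : ∀ i : ℤ, 1 ≤ i → i ≤ 2 * (n : ℤ) - 3 → F i (i - 1) = F (i - 1) (i - 1) - 1
  inner_lb : ∀ i j : ℤ, 2 ≤ i → i ≤ 2 * (n : ℤ) - 3 → 1 ≤ j → j ≤ i - 2 →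
      F i (j - 1) + F (i - 1) j - F (i - 1) (j - 1) - 1 ≤ F i j
  inner_ub : ∀ i j : ℤ, 2 ≤ i → i ≤ 2 * (n : ℤ) - 3 → 1 ≤ j → j ≤ i - 2 →
      F i j ≤ F i (j - 1) + F (i - 1) j - F (i - 1) (j - 1)

/-- The **D**-matrix associated to an **F**-matrix: `D i j = F i j - F i (j-1)`. -/
def Dmat (F : ℤ → ℤ → ℤ) (i j : ℤ) : ℤ := F i j - F i (j - 1)

/-- The **E**-matrix associated to an **F**-matrix: `E i j = D i j - D (i+1) j`. -/
def Emat (F : ℤ → ℤ → ℤ) (i j : ℤ) : ℤ := Dmat F i j - Dmat F (i + 1) j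

/-!
Summing `E i j = D i j - D (i+1) j` along row `i` telescopes twice, leaving `F i i - F (i+1) i`.
For `i < 2n-3` the subdiagonal condition says this difference is `1`; in the last row
`F (i+1) i` lies outside the matrix and `F i i = 1` is the final diagonal condition.
-/

theorem Int.sum_Icc_sub_pred {M : Type*} [AddCommGroup M] (g : ℤ → M) {a b : ℤ} (hab : a ≤ b) :
    ∑ j ∈ Finset.Icc a b, (g j - g (j - 1)) = g b - g (a - 1) := by
  induction b, hab using Int.leInduction with
  | base => simp
  | succ b hab ih =>
    rw [← Finset.insert_Icc_sub_one_right_eq_Icc (by omega), Finset.sum_insert (by simp),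
      add_sub_cancel_right, ih, sub_add_sub_cancel]

theorem sum_Icc_Emat (F : ℤ → ℤ → ℤ) {i : ℤ} (hi : 0 ≤ i) :
    ∑ j ∈ Finset.Icc 0 i, Emat F i j = (F i i - F i (-1)) - (F (i + 1) i - F (i + 1) (-1)) := by
  unfold Emat
  simp only [Finset.sum_sub_distrib, Dmat, Int.sum_Icc_sub_pred (F _) hi, zero_sub]

namespace IsFMatrix

variable {n : ℕ} {F : ℤ → ℤ → ℤ}

theorem sum_Icc_Emat_eq (hF : IsFMatrix n F) {i : ℤ} (hi : 0 ≤ i) :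
    ∑ j ∈ Finset.Icc 0 i, Emat F i j = F i i - F (i + 1) i := by
  rw [sum_Icc_Emat F hi, hF.zero_outside i (-1) (by omega),
    hF.zero_outside (i + 1) (-1) (by omega)]
  ring

theorem diag_sub_subdiag_eq_one (hF : IsFMatrix n F) {i : ℤ} (hi : 0 ≤ i)
    (hi' : i ≤ 2 * (n : ℤ) - 3) : F i i - F (i + 1) i = 1 := by
  rcases hi'.eq_or_lt with rfl | hlt
  · rw [hF.diag_last, hF.zero_outside _ _ (by omega), sub_zero]
  · have h := hF.subdiag (i + 1) (by omega) (by omega)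
    rw [add_sub_cancel_right] at h
    omega

end IsFMatrix

theorem emat_row_sum_one_general (n : ℕ) (F : ℤ → ℤ → ℤ)
    (hF : IsFMatrix n F) :
    ∀ i : ℤ, 0 ≤ i → i ≤ 2 * (n : ℤ) - 3 →
      ∑ j ∈ Finset.Icc (0 : ℤ) i, Emat F i j = 1 := fun _ hi hi' =>
  (hF.sum_Icc_Emat_eq hi).trans (hF.diag_sub_subdiag_eq_one hi hi')

/-- every row of the E-matrix associated to an F-matrix sums to 1. -/
theorem emat_row_sum_one (n : ℕ) (hn : 2 ≤ n) (F : ℤ → ℤ → ℤ)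
    (hF : IsFMatrix n F) :
    ∀ i : ℤ, 0 ≤ i → i ≤ 2 * (n : ℤ) - 3 →
      ∑ j ∈ Finset.Icc (0 : ℤ) i, Emat F i j = 1 :=
  emat_row_sum_one_general n F hF
end

section
/- Let n ≥ 2 and let F be an F-matrix of size 2n−2. Then the column sums of the associated E-matrix satisfy: the sum over i = 0, …, 2n−3 of E_{i,0} equals 2, and for each 1 ≤ j ≤ 2n−3 the sum over i = j, …, 2n−3 of E_{i,j} equals 0 or 2. -/
/-!
The column sum `∑ᵢ E i j` telescopes to the diagonal entry `D j j`, since row `2n-2` of `F`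
vanishes. By the subdiagonal rule `D j j = F j j - F (j-1) (j-1) + 1` for `j ≥ 1`, and the
diagonal steps by `±1` give `0` or `2`. The last diagonal step is not a `±1` step, but the
diagonal has the parity of its index, so `F (2n-4) (2n-4)` is even; it is positive and at most
`F (2n-3) (2n-3) + 1 = 2`, hence `2`, and the last column sums to `0`.
-/

theorem Finset.sum_Icc_int_sub_succ {M : Type*} [AddCommGroup M] (g : ℤ → M) {a b : ℤ}
    (hab : a ≤ b) : ∑ i ∈ Finset.Icc a b, (g i - g (i + 1)) = g a - g (b + 1) := by
  induction b, hab using Int.leInduction with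
  | base => simp
  | succ b hb ih =>
    rw [← Finset.insert_Icc_right_eq_Icc_add_one (by omega), Finset.sum_insert (by simp), ih]
    abel

namespace IsFMatrix

variable {n : ℕ} {F : ℤ → ℤ → ℤ}

theorem two_le (hF : IsFMatrix n F) : 2 ≤ n := by
  by_contra! hn
  have := hF.zero_outside 0 0 (by omega)
  rw [hF.diag_first] at this
  omega

theorem diag_emod_two (hF : IsFMatrix n F) {i : ℤ} (hi : 0 ≤ i) (hiN : i < 2 * (n : ℤ) - 3) :
    F i i % 2 = i % 2 := by
  induction i, hi using Int.leInduction with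
  | base => simp [hF.diag_first]
  | succ i hi ih =>
    have hstep := hF.diag_step (i + 1) (by omega) hiN
    rw [add_sub_cancel_right] at hstep
    have := ih (by omega)
    omega

theorem diag_penultimate (hF : IsFMatrix n F) :
    F (2 * (n : ℤ) - 4) (2 * (n : ℤ) - 4) = 2 := by
  have hn := hF.two_le
  have hpar := hF.diag_emod_two (i := 2 * (n : ℤ) - 4) (by omega) (by omega)
  have hpos := hF.diag_pos (2 * (n : ℤ) - 4) (by omega) (by omega)
  have hsub := hF.subdiag (2 * (n : ℤ) - 3) (by omega) le_rfl
  have hmono := hF.row_mono (2 * (n : ℤ) - 3) (2 * (n : ℤ) - 3) (by omega) le_rfl le_rfl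
  rw [show 2 * (n : ℤ) - 3 - 1 = 2 * n - 4 by ring] at hsub hmono
  rw [hF.diag_last] at hmono
  omega

theorem sum_emat_col_eq_dmat_diag (hF : IsFMatrix n F) {j : ℤ} (hjN : j ≤ 2 * (n : ℤ) - 3) :
    ∑ i ∈ Finset.Icc j (2 * (n : ℤ) - 3), Emat F i j = Dmat F j j := by
  simp only [Emat]
  rw [Finset.sum_Icc_int_sub_succ (fun i => Dmat F i j) hjN]
  simp [Dmat, hF.zero_outside (2 * (n : ℤ) - 3 + 1) _ (by omega)]

theorem dmat_zero_zero (hF : IsFMatrix n F) : Dmat F 0 0 = 2 := by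
  simp [Dmat, hF.diag_first, hF.zero_outside 0 (-1) (by omega)]

theorem dmat_diag_eq_zero_or_two (hF : IsFMatrix n F) {j : ℤ} (hj : 1 ≤ j)
    (hjN : j ≤ 2 * (n : ℤ) - 3) :
    Dmat F j j = 0 ∨ Dmat F j j = 2 := by
  rw [Dmat, hF.subdiag j hj hjN]
  rcases hjN.lt_or_eq with hjN | rfl
  · rcases hF.diag_step j (by omega) hjN with h | h <;> omega
  · rw [hF.diag_last, show 2 * (n : ℤ) - 3 - 1 = 2 * n - 4 by ring, hF.diag_penultimate]
    omega

end IsFMatrix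

theorem emat_col_sums_general (n : ℕ) (F : ℤ → ℤ → ℤ)
    (hF : IsFMatrix n F) :
    (∑ i ∈ Finset.Icc (0 : ℤ) (2 * (n : ℤ) - 3), Emat F i 0 = 2) ∧
    ∀ j : ℤ, 1 ≤ j → j ≤ 2 * (n : ℤ) - 3 →
      (∑ i ∈ Finset.Icc j (2 * (n : ℤ) - 3), Emat F i j = 0 ∨
       ∑ i ∈ Finset.Icc j (2 * (n : ℤ) - 3), Emat F i j = 2) := by
  have hn := hF.two_le
  refine ⟨?_, fun j hj hjN => ?_⟩
  · rw [hF.sum_emat_col_eq_dmat_diag (by omega), hF.dmat_zero_zero]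
  · rw [hF.sum_emat_col_eq_dmat_diag hjN]
    exact hF.dmat_diag_eq_zero_or_two hj hjN

/-- column 0 of the associated E-matrix sums to 2, and every other
column sums to 0 or 2. -/
theorem emat_col_sums (n : ℕ) (hn : 2 ≤ n) (F : ℤ → ℤ → ℤ)
    (hF : IsFMatrix n F) :
    (∑ i ∈ Finset.Icc (0 : ℤ) (2 * (n : ℤ) - 3), Emat F i 0 = 2) ∧
    ∀ j : ℤ, 1 ≤ j → j ≤ 2 * (n : ℤ) - 3 →
      (∑ i ∈ Finset.Icc j (2 * (n : ℤ) - 3), Emat F i j = 0 ∨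
       ∑ i ∈ Finset.Icc j (2 * (n : ℤ) - 3), Emat F i j = 2) :=
  emat_col_sums_general n F hF
end

section
/- Let n ≥ 2 and let E be a lower triangular (2n−2)×(2n−2) matrix, indexed by 0 ≤ j ≤ i ≤ 2n−3, whose entries all lie in {0,1}, such that every row sums to 1 (i.e., Σ_{j=0}^{i} E_{i,j} = 1 for each i), column 0 sums to 2, and every column sums to 0 or 2 (i.e., Σ_{i=j}^{2n−3} E_{i,j} ∈ {0,2} for each j). Define D_{i,j} = Σ_{ℓ=i}^{2n−3} E_{ℓ,j} and F_{i,j} = Σ_{ℓ=0}^{j} D_{i,ℓ} for 0 ≤ j ≤ i ≤ 2n−3. Then F is an F-matrix of size 2n−2, i.e., it satisfies constraints (1), (2), (3a), (3b), and (3c). -/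
/-- a lower triangular 0/1 matrix `E` whose rows sum to 1, whose column 0
sums to 2, and whose columns sum to 0 or 2, gives rise (via `D_{i,j} = Σ_{ℓ=i}^{2n-3} E_{ℓ,j}`
and `F_{i,j} = Σ_{ℓ=0}^{j} D_{i,ℓ}`) to an F-matrix of size `2n-2`. -/
theorem fmatrix_of_emat (n : ℕ) (hn : 2 ≤ n) (E : ℤ → ℤ → ℤ)
    (hvals : ∀ i j : ℤ, 0 ≤ j → j ≤ i → i ≤ 2 * (n : ℤ) - 3 → E i j = 0 ∨ E i j = 1)
    (hzero : ∀ i j : ℤ, j < 0 ∨ i < j ∨ 2 * (n : ℤ) - 3 < i → E i j = 0)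
    (hrow : ∀ i : ℤ, 0 ≤ i → i ≤ 2 * (n : ℤ) - 3 →
      ∑ j ∈ Finset.Icc (0 : ℤ) i, E i j = 1)
    (hcol0 : ∑ i ∈ Finset.Icc (0 : ℤ) (2 * (n : ℤ) - 3), E i 0 = 2)
    (hcol : ∀ j : ℤ, 0 ≤ j → j ≤ 2 * (n : ℤ) - 3 →
      (∑ i ∈ Finset.Icc j (2 * (n : ℤ) - 3), E i j = 0 ∨
       ∑ i ∈ Finset.Icc j (2 * (n : ℤ) - 3), E i j = 2)) :
    IsFMatrix n (fun i j =>
      if 0 ≤ j ∧ j ≤ i ∧ i ≤ 2 * (n : ℤ) - 3 then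
        ∑ ℓ ∈ Finset.Icc (0 : ℤ) j, ∑ m ∈ Finset.Icc i (2 * (n : ℤ) - 3), E m ℓ
      else 0) := by
  have hn' : (2 : ℤ) ≤ (n : ℤ) := by exact_mod_cast hn
  set N : ℤ := 2 * (n : ℤ) - 3 with hNdef
  have hN1 : 1 ≤ N := by omega
  -- splitting off the top / bottom element of an interval sum
  have splitTop : ∀ (f : ℤ → ℤ) (a b : ℤ), a ≤ b →
      ∑ x ∈ Finset.Icc a b, f x = (∑ x ∈ Finset.Icc a (b - 1), f x) + f b := by
    intro f a b h
    have h1 : Finset.Icc a b = insert b (Finset.Icc a (b - 1)) := by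
      ext x; simp only [Finset.mem_Icc, Finset.mem_insert]; omega
    rw [h1, Finset.sum_insert (by simp only [Finset.mem_Icc]; omega), add_comm]
  have splitBot : ∀ (f : ℤ → ℤ) (a b : ℤ), a ≤ b →
      ∑ x ∈ Finset.Icc a b, f x = f a + ∑ x ∈ Finset.Icc (a + 1) b, f x := by
    intro f a b h
    have h1 : Finset.Icc a b = insert a (Finset.Icc (a + 1) b) := by
      ext x; simp only [Finset.mem_Icc, Finset.mem_insert]; omega
    rw [h1, Finset.sum_insert (by simp only [Finset.mem_Icc]; omega)]
  have hE0 : ∀ i j : ℤ, 0 ≤ E i j := by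
    intro i j
    by_cases h : 0 ≤ j ∧ j ≤ i ∧ i ≤ N
    · rcases hvals i j h.1 h.2.1 h.2.2 with h' | h' <;> omega
    · rw [hzero i j (by omega)]
  set D : ℤ → ℤ → ℤ := fun i j => ∑ m ∈ Finset.Icc i N, E m j with hDdef
  set G : ℤ → ℤ → ℤ := fun i j => ∑ ℓ ∈ Finset.Icc (0 : ℤ) j, D i ℓ with hGdef
  have hDnn : ∀ i j : ℤ, 0 ≤ D i j := fun i j => Finset.sum_nonneg fun m _ => hE0 m j
  have hGnn : ∀ i j : ℤ, 0 ≤ G i j := fun i j => Finset.sum_nonneg fun ℓ _ => hDnn i ℓ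
  have hDrec : ∀ i j : ℤ, i ≤ N → D i j = E i j + D (i + 1) j := by
    intro i j h
    simp only [hDdef]
    exact splitBot (fun m => E m j) i N h
  have hDstep : ∀ i j : ℤ, i ≤ N + 1 → D (i - 1) j = E (i - 1) j + D i j := by
    intro i j h
    have h2 := hDrec (i - 1) j (by omega)
    rw [show i - 1 + 1 = i from by ring] at h2
    exact h2
  have hGstep : ∀ i j : ℤ, 0 ≤ j → G i j = G i (j - 1) + D i j := by
    intro i j h
    simp only [hGdef]
    exact splitTop (fun ℓ => D i ℓ) 0 j h
  have hSnn : ∀ m j : ℤ, 0 ≤ ∑ ℓ ∈ Finset.Icc (0 : ℤ) j, E m ℓ :=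
    fun m j => Finset.sum_nonneg fun ℓ _ => hE0 m ℓ
  have hSle : ∀ m j : ℤ, 0 ≤ m → m ≤ N → ∑ ℓ ∈ Finset.Icc (0 : ℤ) j, E m ℓ ≤ 1 := by
    intro m j hm hmN
    by_cases hj : j ≤ m
    · calc ∑ ℓ ∈ Finset.Icc (0 : ℤ) j, E m ℓ ≤ ∑ ℓ ∈ Finset.Icc (0 : ℤ) m, E m ℓ :=
            Finset.sum_le_sum_of_subset_of_nonneg
              (Finset.Icc_subset_Icc_right hj) (fun ℓ _ _ => hE0 m ℓ)
        _ = 1 := hrow m hm hmN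
    · have heq : ∑ ℓ ∈ Finset.Icc (0 : ℤ) m, E m ℓ = ∑ ℓ ∈ Finset.Icc (0 : ℤ) j, E m ℓ :=
        Finset.sum_subset (Finset.Icc_subset_Icc_right (by omega))
          (fun ℓ hℓ hℓ' => by
            simp only [Finset.mem_Icc] at hℓ hℓ'
            exact hzero m ℓ (by omega))
      rw [← heq, hrow m hm hmN]
  have hGcol : ∀ i j : ℤ, i ≤ N + 1 →
      G (i - 1) j = G i j + ∑ ℓ ∈ Finset.Icc (0 : ℤ) j, E (i - 1) ℓ := by
    intro i j h
    simp only [hGdef]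
    rw [← Finset.sum_add_distrib]
    exact Finset.sum_congr rfl fun ℓ _ => by rw [hDstep i ℓ h]; ring
  have hfun : (fun i j : ℤ =>
      if 0 ≤ j ∧ j ≤ i ∧ i ≤ N then
        ∑ ℓ ∈ Finset.Icc (0 : ℤ) j, ∑ m ∈ Finset.Icc i N, E m ℓ
      else 0) = (fun i j : ℤ => if 0 ≤ j ∧ j ≤ i ∧ i ≤ N then G i j else 0) := by
    simp only [hGdef, hDdef]
  rw [hfun]
  constructor
  · -- nonneg
    intro i j
    split_ifs with h
    · exact hGnn i j
    · exact le_refl 0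
  · -- zero_outside
    intro i j h
    rw [if_neg (by omega)]
  · -- row_mono
    intro i j h1 h2 h3
    rw [if_pos ⟨by omega, by omega, h3⟩, if_pos ⟨by omega, h2, h3⟩]
    have := hGstep i j (by omega)
    have := hDnn i j
    omega
  · -- col_lb
    intro i j h0 hji hiN
    rw [if_pos ⟨h0, by omega, by omega⟩, if_pos ⟨h0, by omega, hiN⟩]
    have h1 := hGcol i j (by omega)
    have h2 := hSle (i - 1) j (by omega) (by omega)
    omega
  · -- col_ub
    intro i j h0 hji hiN
    rw [if_pos ⟨h0, by omega, hiN⟩, if_pos ⟨h0, by omega, by omega⟩]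
    have h1 := hGcol i j (by omega)
    have h2 := hSnn (i - 1) j
    omega
  · -- diag_pos
    intro i h0 hiN
    rw [if_pos ⟨h0, le_refl i, hiN⟩]
    have h1 : ∑ ℓ ∈ Finset.Icc (0 : ℤ) i, E i ℓ ≤ G i i := by
      simp only [hGdef]
      refine Finset.sum_le_sum fun ℓ _ => ?_
      have := hDrec i ℓ hiN
      have := hDnn (i + 1) ℓ
      omega
    rw [hrow i h0 hiN] at h1
    omega
  · -- diag_first
    rw [if_pos ⟨le_refl 0, le_refl 0, by omega⟩]
    simp only [hGdef, hDdef]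
    rw [Finset.Icc_self, Finset.sum_singleton]
    exact hcol0
  · -- diag_step
    intro i h0 hiN
    rw [if_pos ⟨by omega, le_refl i, by omega⟩, if_pos ⟨by omega, le_refl _, by omega⟩]
    have h1 := hGstep i i (by omega)
    have h2 := hGcol i (i - 1) (by omega)
    have h3 : ∑ ℓ ∈ Finset.Icc (0 : ℤ) (i - 1), E (i - 1) ℓ = 1 :=
      hrow (i - 1) (by omega) (by omega)
    have h4 : D i i = 0 ∨ D i i = 2 := by
      simp only [hDdef]
      exact hcol i (by omega) (by omega)
    rcases h4 with h4 | h4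
    · right; omega
    · left; omega
  · -- diag_last
    rw [if_pos ⟨by omega, le_refl N, le_refl N⟩]
    simp only [hGdef, hDdef]
    calc ∑ ℓ ∈ Finset.Icc (0 : ℤ) N, ∑ m ∈ Finset.Icc N N, E m ℓ
        = ∑ ℓ ∈ Finset.Icc (0 : ℤ) N, E N ℓ :=
          Finset.sum_congr rfl fun ℓ _ => by rw [Finset.Icc_self, Finset.sum_singleton]
      _ = 1 := hrow N (by omega) (le_refl N)
  · -- subdiag
    intro i h1 hiN
    rw [if_pos ⟨by omega, by omega, hiN⟩, if_pos ⟨by omega, le_refl _, by omega⟩]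
    have h2 := hGcol i (i - 1) (by omega)
    have h3 : ∑ ℓ ∈ Finset.Icc (0 : ℤ) (i - 1), E (i - 1) ℓ = 1 :=
      hrow (i - 1) (by omega) (by omega)
    omega
  · -- inner_lb
    intro i j h2i hiN h1j hj
    rw [if_pos ⟨by omega, by omega, by omega⟩, if_pos ⟨by omega, by omega, by omega⟩,
        if_pos ⟨by omega, by omega, by omega⟩, if_pos ⟨by omega, by omega, by omega⟩]
    have h1 := hGstep i j (by omega)
    have h2 := hGstep (i - 1) j (by omega)
    have h3 := hDstep i j (by omega)
    have h4 := hvals (i - 1) j (by omega) (by omega) (by omega)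
    omega
  · -- inner_ub
    intro i j h2i hiN h1j hj
    rw [if_pos ⟨by omega, by omega, by omega⟩, if_pos ⟨by omega, by omega, by omega⟩,
        if_pos ⟨by omega, by omega, by omega⟩, if_pos ⟨by omega, by omega, by omega⟩]
    have h1 := hGstep i j (by omega)
    have h2 := hGstep (i - 1) j (by omega)
    have h3 := hDstep i j (by omega)
    have h4 := hE0 (i - 1) j
    omega
end

section
/- Let n and N be nonnegative integers with N ≤ 2n−3, and let f_0, …, f_N be positive integers such that f_0 = 2, f_i = f_{i−1} ± 1 for 1 ≤ i ≤ N, and f_i ≤ 2n−i−2 for 0 ≤ i ≤ N. Then there exists an F-matrix F of size 2n−2 with F_{i,i} = f_i for all 0 ≤ i ≤ N. -/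
structure IsDiagonalWalk (M : ℤ) (g : ℤ → ℤ) : Prop where
  first : g 0 = 2
  pos : ∀ i, 0 ≤ i → i ≤ M → 0 < g i
  step : ∀ i, 1 ≤ i → i ≤ M → g i = g (i - 1) + 1 ∨ g i = g (i - 1) - 1
  last : g M = 1

def fMatrixOfDiagonal (M : ℤ) (g : ℤ → ℤ) (i j : ℤ) : ℤ :=
  if 0 ≤ j ∧ j ≤ i ∧ i ≤ M then max 0 (g j + j - i) else 0

section fMatrixOfDiagonal

variable {M : ℤ} {g : ℤ → ℤ} {i j : ℤ}

theorem fMatrixOfDiagonal_of_le (hj : 0 ≤ j) (hji : j ≤ i) (hiM : i ≤ M) :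
    fMatrixOfDiagonal M g i j = max 0 (g j + j - i) :=
  if_pos ⟨hj, hji, hiM⟩

theorem fMatrixOfDiagonal_of_not_le (h : ¬(0 ≤ j ∧ j ≤ i ∧ i ≤ M)) :
    fMatrixOfDiagonal M g i j = 0 :=
  if_neg h

theorem fMatrixOfDiagonal_nonneg : 0 ≤ fMatrixOfDiagonal M g i j := by
  unfold fMatrixOfDiagonal
  split_ifs <;> simp

theorem fMatrixOfDiagonal_self (hi : 0 ≤ i) (hiM : i ≤ M) (hg : 0 ≤ g i) :
    fMatrixOfDiagonal M g i i = g i := by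
  rw [fMatrixOfDiagonal_of_le hi le_rfl hiM]
  omega

theorem fMatrixOfDiagonal_sub_one_left (hj : 0 ≤ j) (hji : j < i) (hiM : i ≤ M) :
    fMatrixOfDiagonal M g (i - 1) j - 1 ≤ fMatrixOfDiagonal M g i j ∧
      fMatrixOfDiagonal M g i j ≤ fMatrixOfDiagonal M g (i - 1) j := by
  rw [fMatrixOfDiagonal_of_le hj hji.le hiM, fMatrixOfDiagonal_of_le hj (by omega) (by omega)]
  omega

theorem fMatrixOfDiagonal_sub_one_right_le (hj : 1 ≤ j)
    (hstep : g j = g (j - 1) + 1 ∨ g j = g (j - 1) - 1) (hji : j ≤ i) (hiM : i ≤ M) :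
    fMatrixOfDiagonal M g i (j - 1) ≤ fMatrixOfDiagonal M g i j := by
  rw [fMatrixOfDiagonal_of_le (by omega) hji hiM, fMatrixOfDiagonal_of_le (by omega) (by omega) hiM]
  omega

theorem fMatrixOfDiagonal_inner (hj : 1 ≤ j)
    (hstep : g j = g (j - 1) + 1 ∨ g j = g (j - 1) - 1) (hji : j < i) (hiM : i ≤ M) :
    let F := fMatrixOfDiagonal M g
    F i (j - 1) + F (i - 1) j - F (i - 1) (j - 1) - 1 ≤ F i j ∧
      F i j ≤ F i (j - 1) + F (i - 1) j - F (i - 1) (j - 1) := by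
  intro F
  simp only [F, fMatrixOfDiagonal_of_le (by omega : 0 ≤ j) hji.le hiM,
    fMatrixOfDiagonal_of_le (by omega : 0 ≤ j - 1) (by omega : j - 1 ≤ i) hiM,
    fMatrixOfDiagonal_of_le (by omega : 0 ≤ j) (by omega : j ≤ i - 1) (by omega : i - 1 ≤ M),
    fMatrixOfDiagonal_of_le (by omega : 0 ≤ j - 1) (by omega : j - 1 ≤ i - 1)
      (by omega : i - 1 ≤ M)]
  omega

end fMatrixOfDiagonal

theorem isFMatrix_fMatrixOfDiagonal {n : ℕ} (hn : 2 ≤ n) {g : ℤ → ℤ}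
    (hg : IsDiagonalWalk (2 * n - 3) g) :
    IsFMatrix n (fMatrixOfDiagonal (2 * n - 3) g) := by
  have hdiag (i : ℤ) (hi : 0 ≤ i) (hiM : i ≤ 2 * n - 3) :
      fMatrixOfDiagonal (2 * n - 3) g i i = g i :=
    fMatrixOfDiagonal_self hi hiM (hg.pos i hi hiM).le
  have hM : (0 : ℤ) ≤ 2 * n - 3 := by omega
  refine
    { nonneg := fun _ _ => fMatrixOfDiagonal_nonneg
      zero_outside := fun _ _ h => fMatrixOfDiagonal_of_not_le (by omega)
      row_mono := fun i j hj hji hiM =>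
        fMatrixOfDiagonal_sub_one_right_le hj (hg.step j hj (by omega)) hji hiM
      col_lb := fun i j hj hji hiM => (fMatrixOfDiagonal_sub_one_left hj hji hiM).1
      col_ub := fun i j hj hji hiM => (fMatrixOfDiagonal_sub_one_left hj hji hiM).2
      diag_pos := fun i hi hiM => (hdiag i hi hiM).symm ▸ hg.pos i hi hiM
      diag_first := (hdiag 0 le_rfl hM).trans hg.first
      diag_step := fun i hi hiM => by
        rw [hdiag i hi.le hiM.le, hdiag (i - 1) (by omega) (by omega)]
        exact hg.step i hi (by omega)
      diag_last := (hdiag _ hM le_rfl).trans hg.last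
      subdiag := fun i hi hiM => by
        rw [fMatrixOfDiagonal_of_le (by omega) (by omega) hiM, hdiag (i - 1) (by omega) (by omega)]
        have hprev := hg.pos (i - 1) (by omega) (by omega)
        omega
      inner_lb := fun i j _ hiM hj hji =>
        (fMatrixOfDiagonal_inner hj (hg.step j hj (by omega)) (by omega) hiM).1
      inner_ub := fun i j _ hiM hj hji =>
        (fMatrixOfDiagonal_inner hj (hg.step j hj (by omega)) (by omega) hiM).2 }

theorem max_eq_max_add_one_or_sub_one {a b a' b' : ℤ} (ha : a' = a + 1 ∨ a' = a - 1)
    (hb : b' = b + 1 ∨ b' = b - 1) (hab : a % 2 = b % 2) :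
    max a' b' = max a b + 1 ∨ max a' b' = max a b - 1 := by
  omega

theorem emod_two_eq_of_forall_step {g : ℤ → ℤ}
    (hstep : ∀ i, 1 ≤ i → g i = g (i - 1) + 1 ∨ g i = g (i - 1) - 1) {i : ℤ} (hi : 0 ≤ i) :
    g i % 2 = (g 0 + i) % 2 := by
  induction i, hi using Int.leInduction with
  | base => simp
  | succ k hk ih =>
    have hk1 := hstep (k + 1) (by omega)
    rw [add_sub_cancel_right] at hk1
    omega

section DiagonalExtension

variable {N : ℤ} {f : ℤ → ℤ}

def descentAfter (N : ℤ) (f : ℤ → ℤ) (i : ℤ) : ℤ :=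
  if i ≤ N then f i else f N + N - i

theorem descentAfter_step (hstep : ∀ i, 1 ≤ i → i ≤ N → f i = f (i - 1) + 1 ∨ f i = f (i - 1) - 1)
    {i : ℤ} (hi : 1 ≤ i) :
    descentAfter N f i = descentAfter N f (i - 1) + 1 ∨
      descentAfter N f i = descentAfter N f (i - 1) - 1 := by
  unfold descentAfter
  split_ifs with hiN hiN'
  · exact hstep i hi hiN
  · omega
  · obtain rfl : i - 1 = N := by omega
    omega
  · omega

theorem descentAfter_emod_two (hN : 0 ≤ N) (h0 : f 0 = 2)
    (hstep : ∀ i, 1 ≤ i → i ≤ N → f i = f (i - 1) + 1 ∨ f i = f (i - 1) - 1)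
    {i : ℤ} (hi : 0 ≤ i) : descentAfter N f i % 2 = i % 2 := by
  have hpar := emod_two_eq_of_forall_step (fun _ hj => descentAfter_step hstep hj) hi
  have hstart : descentAfter N f 0 = 2 := (if_pos hN).trans h0
  omega

/-- The floor `2 - i % 2` is the least positive sequence with unit steps and `2` at `0`. -/
def diagonalExtension (N : ℤ) (f : ℤ → ℤ) (i : ℤ) : ℤ :=
  max (descentAfter N f i) (2 - i % 2)

theorem diagonalExtension_of_le (hpos : ∀ i, 0 ≤ i → i ≤ N → 0 < f i) (h0 : f 0 = 2)
    (hstep : ∀ i, 1 ≤ i → i ≤ N → f i = f (i - 1) + 1 ∨ f i = f (i - 1) - 1)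
    {i : ℤ} (hi : 0 ≤ i) (hiN : i ≤ N) : diagonalExtension N f i = f i := by
  have hpar := descentAfter_emod_two (hi.trans hiN) h0 hstep hi
  have hfi := hpos i hi hiN
  rw [descentAfter, if_pos hiN] at hpar
  rw [diagonalExtension, descentAfter, if_pos hiN]
  omega

theorem isDiagonalWalk_diagonalExtension {M : ℤ} (hN : 0 ≤ N) (hNM : N ≤ M) (hM : M % 2 = 1)
    (hpos : ∀ i, 0 ≤ i → i ≤ N → 0 < f i) (h0 : f 0 = 2)
    (hstep : ∀ i, 1 ≤ i → i ≤ N → f i = f (i - 1) + 1 ∨ f i = f (i - 1) - 1)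
    (hbd : f N ≤ M + 1 - N) : IsDiagonalWalk M (diagonalExtension N f) where
  first := (diagonalExtension_of_le hpos h0 hstep le_rfl hN).trans h0
  pos i _ _ := by
    rw [diagonalExtension]
    omega
  step i hi _ := by
    have hpar := descentAfter_emod_two hN h0 hstep (by omega : 0 ≤ i - 1)
    exact max_eq_max_add_one_or_sub_one (descentAfter_step hstep hi) (by omega) (by omega)
  last := by
    have hfN := hpos N hN le_rfl
    rw [diagonalExtension, descentAfter]
    split_ifs with hMN
    · obtain rfl : M = N := by omega
      omega
    · omega

end DiagonalExtension

/-- Corollary on diagonals: any valid partial diagonal sequence is the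
diagonal of some F-matrix of size `2n-2`. -/
theorem exists_fmatrix_with_diagonal (n N : ℕ) (hN : (N : ℤ) ≤ 2 * (n : ℤ) - 3)
    (f : ℤ → ℤ)
    (hpos : ∀ i : ℤ, 0 ≤ i → i ≤ (N : ℤ) → 0 < f i)
    (h0 : f 0 = 2)
    (hstep : ∀ i : ℤ, 1 ≤ i → i ≤ (N : ℤ) → f i = f (i - 1) + 1 ∨ f i = f (i - 1) - 1)
    (hbd : ∀ i : ℤ, 0 ≤ i → i ≤ (N : ℤ) → f i ≤ 2 * (n : ℤ) - i - 2) :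
    ∃ F : ℤ → ℤ → ℤ, IsFMatrix n F ∧ ∀ i : ℤ, 0 ≤ i → i ≤ (N : ℤ) → F i i = f i := by
  have hN0 : (0 : ℤ) ≤ N := N.cast_nonneg
  have hwalk : IsDiagonalWalk (2 * n - 3) (diagonalExtension N f) :=
    isDiagonalWalk_diagonalExtension hN0 hN (by omega) hpos h0 hstep
      (by linarith [hbd N hN0 le_rfl])
  refine ⟨_, isFMatrix_fMatrixOfDiagonal (by omega) hwalk, fun i hi hiN => ?_⟩
  rw [fMatrixOfDiagonal_self hi (hiN.trans hN) (hwalk.pos i hi (hiN.trans hN)).le,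
    diagonalExtension_of_le hpos h0 hstep hi hiN]
end

section
/- Let n and N be nonnegative integers with N ≤ 2n−3, and let f_0, …, f_N be positive integers such that f_0 = 2, f_i = f_{i−1} ± 1 for 1 ≤ i ≤ N, and f_i ≤ 2n−i−2 for 0 ≤ i ≤ N. Then the sequence extends to positive integers f_0, …, f_{2n−3} satisfying f_i = f_{i−1} ± 1 for 1 ≤ i ≤ 2n−3, f_i ≤ 2n−i−2 for 0 ≤ i ≤ 2n−3, and f_{2n−3} = 1. -/
/-!
Steps of `±1` preserve the parity of `f i + i`, so `f N + N` is even. Past `N`, continue with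
`min (f N + (i - N)) (2n - 2 - i)`: the first branch climbs and the second descends by one per
step, and since their sum has constant even parity the minimum also moves by exactly one. The
descending branch keeps the bound and reaches `1` at `i = 2n - 3`, while the climbing branch
stays above it there.
-/

theorem even_add_of_steps_one {f : ℤ → ℤ} {N : ℤ} (h0 : Even (f 0))
    (hstep : ∀ i : ℤ, 1 ≤ i → i ≤ N → f i = f (i - 1) + 1 ∨ f i = f (i - 1) - 1) :
    ∀ i : ℤ, 0 ≤ i → i ≤ N → Even (f i + i) := by
  intro i hi
  induction i, hi using Int.leInduction with
  | base => simpa using fun _ ↦ h0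
  | succ k hk ih =>
    intro hkN
    have hk_step := hstep (k + 1) (by omega) hkN
    rw [add_sub_cancel_right] at hk_step
    have := ih (by omega)
    rw [Int.even_iff] at this ⊢
    omega

theorem min_add_one_sub_one_of_even {a b : ℤ} (h : Even (a + b)) :
    min (a + 1) (b - 1) = min a b + 1 ∨ min (a + 1) (b - 1) = min a b - 1 := by
  rw [Int.even_iff] at h
  omega

def extendPast (f : ℤ → ℤ) (N top : ℤ) (i : ℤ) : ℤ :=
  if i ≤ N then f i else min (f N + (i - N)) (top - i)

section extendPast

variable {f : ℤ → ℤ} {N top i : ℤ}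

theorem extendPast_of_le (hi : i ≤ N) : extendPast f N top i = f i := if_pos hi

theorem extendPast_of_ge (hN : f N ≤ top - N) (hi : N ≤ i) :
    extendPast f N top i = min (f N + (i - N)) (top - i) := by
  unfold extendPast
  split_ifs with h
  · rw [le_antisymm h hi]
    omega
  · rfl

theorem extendPast_step (hN : f N ≤ top - N) (hpar : Even (f N + N + top)) (hi : N < i) :
    extendPast f N top i = extendPast f N top (i - 1) + 1 ∨
      extendPast f N top i = extendPast f N top (i - 1) - 1 := by
  rw [extendPast_of_ge hN hi.le, extendPast_of_ge hN (by omega)]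
  have hsum : Even ((f N + (i - 1 - N)) + (top - (i - 1))) := by
    rw [Int.even_iff] at hpar ⊢
    omega
  convert min_add_one_sub_one_of_even hsum using 2 <;> ring_nf

end extendPast

theorem diagonal_extends_general (n N : ℕ)
    (f : ℤ → ℤ)
    (hpos : ∀ i : ℤ, 0 ≤ i → i ≤ (N : ℤ) → 0 < f i)
    (h0 : f 0 = 2)
    (hstep : ∀ i : ℤ, 1 ≤ i → i ≤ (N : ℤ) → f i = f (i - 1) + 1 ∨ f i = f (i - 1) - 1)
    (hbd : ∀ i : ℤ, 0 ≤ i → i ≤ (N : ℤ) → f i ≤ 2 * (n : ℤ) - i - 2) :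
    ∃ g : ℤ → ℤ,
      (∀ i : ℤ, 0 ≤ i → i ≤ (N : ℤ) → g i = f i) ∧
      (∀ i : ℤ, 0 ≤ i → i ≤ 2 * (n : ℤ) - 3 → 0 < g i) ∧
      (∀ i : ℤ, 1 ≤ i → i ≤ 2 * (n : ℤ) - 3 →
        g i = g (i - 1) + 1 ∨ g i = g (i - 1) - 1) ∧
      (∀ i : ℤ, 0 ≤ i → i ≤ 2 * (n : ℤ) - 3 → g i ≤ 2 * (n : ℤ) - i - 2) ∧
      g (2 * (n : ℤ) - 3) = 1 := by
  have hN0 : (0 : ℤ) ≤ N := N.cast_nonneg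
  have hn : (0 : ℤ) ≤ 2 * n - 3 := by have := hbd 0 le_rfl hN0; omega
  have hposN := hpos N hN0 le_rfl
  have hbdN := hbd N hN0 le_rfl
  have hpar := even_add_of_steps_one (h0 ▸ even_two) hstep N hN0 le_rfl
  have hbdN' : f N ≤ 2 * n - 2 - N := by omega
  have hparN : Even (f N + N + (2 * n - 2)) := hpar.add (by rw [Int.even_iff]; omega)
  refine ⟨extendPast f N (2 * n - 2), fun i _ hi ↦ extendPast_of_le hi, ?_, ?_, ?_, ?_⟩
  · intro i hi0 hi
    rcases le_or_gt i N with hiN | hiN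
    · rw [extendPast_of_le hiN]; exact hpos i hi0 hiN
    · rw [extendPast_of_ge hbdN' hiN.le]; omega
  · intro i hi1 hi
    rcases le_or_gt i N with hiN | hiN
    · rw [extendPast_of_le hiN, extendPast_of_le (by omega)]; exact hstep i hi1 hiN
    · exact extendPast_step hbdN' hparN hiN
  · intro i hi0 hi
    rcases le_or_gt i N with hiN | hiN
    · rw [extendPast_of_le hiN]; exact hbd i hi0 hiN
    · rw [extendPast_of_ge hbdN' hiN.le]; omega
  · rcases le_or_gt (2 * (n : ℤ) - 3) N with hiN | hiN
    · rw [extendPast_of_le hiN]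
      have := hpos _ hn hiN
      have := hbd _ hn hiN
      omega
    · rw [extendPast_of_ge hbdN' hiN.le]; omega

/-- a valid partial diagonal sequence extends to a full diagonal sequence
of length `2n-2` ending at `1`. -/
theorem diagonal_extends (n N : ℕ) (hN : (N : ℤ) ≤ 2 * (n : ℤ) - 3)
    (f : ℤ → ℤ)
    (hpos : ∀ i : ℤ, 0 ≤ i → i ≤ (N : ℤ) → 0 < f i)
    (h0 : f 0 = 2)
    (hstep : ∀ i : ℤ, 1 ≤ i → i ≤ (N : ℤ) → f i = f (i - 1) + 1 ∨ f i = f (i - 1) - 1)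
    (hbd : ∀ i : ℤ, 0 ≤ i → i ≤ (N : ℤ) → f i ≤ 2 * (n : ℤ) - i - 2) :
    ∃ g : ℤ → ℤ,
      (∀ i : ℤ, 0 ≤ i → i ≤ (N : ℤ) → g i = f i) ∧
      (∀ i : ℤ, 0 ≤ i → i ≤ 2 * (n : ℤ) - 3 → 0 < g i) ∧
      (∀ i : ℤ, 1 ≤ i → i ≤ 2 * (n : ℤ) - 3 →
        g i = g (i - 1) + 1 ∨ g i = g (i - 1) - 1) ∧
      (∀ i : ℤ, 0 ≤ i → i ≤ 2 * (n : ℤ) - 3 → g i ≤ 2 * (n : ℤ) - i - 2) ∧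
      g (2 * (n : ℤ) - 3) = 1 :=
  diagonal_extends_general n N f hpos h0 hstep hbd
end

section
/- Let f be an (n,N,M) F-sequence with M < N−2 and suppose f_{N−1,M+1} ≠ f_{N−1,N−1}. Then L_f(N,M+1) ≤ U_f(N,M+1), and extending f by setting f_{N,M+1} equal to either L_f(N,M+1) or U_f(N,M+1) yields an (n,N,M+1) F-sequence. -/
/-!
The one nontrivial input is that row `N-1` does not decrease at column `M+1`:
`f_{N-1,M} ≤ f_{N-1,M+1}`. Away from the diagonal this is part of the lower bound `L`;
next to it, it follows from the diagonal step and the special rule. Combined with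
`L_f(N,M) ≤ f_{N,M} ≤ U_f(N,M)` it gives `L_f(N,M+1) ≤ U_f(N,M+1)` by linear arithmetic.
The new entry is read by no other constraint of the `(n,N,M+1)` domain, and the special rule
at `(N,M+1)` is vacuous because `f_{N-1,M+1} ≠ f_{N-1,N-1}`.
-/


/-- The lower bound `L_f(i,j)` used in the F-sequence constraints. -/
def Lb (f : ℤ → ℤ → ℤ) (i j : ℤ) : ℤ :=
  max (f i (j - 1)) (max (f (i - 1) j - 1)
    (f i (j - 1) + f (i - 1) j - f (i - 1) (j - 1) - 1))

/-- The upper bound `U_f(i,j)` used in the F-sequence constraints. -/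
def Ub (f : ℤ → ℤ → ℤ) (i j : ℤ) : ℤ :=
  min (f (i - 1) j) (f i (j - 1) + f (i - 1) j - f (i - 1) (j - 1))

/-- The index domain of an `(n,N,M)` F-sequence:
`{(i,j) : 0 ≤ j ≤ i ≤ N-1} ∪ {(N,j) : 0 ≤ j ≤ M}`. -/
def ValidIdx (N M i j : ℤ) : Prop :=
  (0 ≤ j ∧ j ≤ i ∧ i ≤ N - 1) ∨ (i = N ∧ 0 ≤ j ∧ j ≤ M)

/-- An `(n,N,M)` **F**-sequence: a partially filled F-matrix, filled on the domain
`{(i,j) : 0 ≤ j ≤ i ≤ N-1} ∪ {(N,j) : 0 ≤ j ≤ M}` (and zero elsewhere). -/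
structure IsFSeq (n N M : ℕ) (f : ℤ → ℤ → ℤ) : Prop where
  hMN : M ≤ N
  hN2n : (N : ℤ) ≤ 2 * (n : ℤ) - 3
  zero_outside : ∀ i j : ℤ, ¬ ValidIdx (N : ℤ) (M : ℤ) i j → f i j = 0
  nonneg : ∀ i j : ℤ, 0 ≤ f i j
  diag_pos : ∀ i : ℤ, 0 ≤ i → i ≤ max ((N : ℤ) - 1) (M : ℤ) → 0 < f i i
  diag_first : f 0 0 = 2
  diag_step : ∀ i : ℤ, 1 ≤ i → i ≤ max ((N : ℤ) - 1) (M : ℤ) →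
      f i i = f (i - 1) (i - 1) + 1 ∨ f i i = f (i - 1) (i - 1) - 1
  diag_bound : ∀ i : ℤ, 0 ≤ i → i ≤ max ((N : ℤ) - 1) (M : ℤ) →
      f i i ≤ 2 * (n : ℤ) - i - 2
  bounds : ∀ i j : ℤ, ValidIdx (N : ℤ) (M : ℤ) i j → 0 ≤ j → j ≤ i - 2 →
      Lb f i j ≤ f i j ∧ f i j ≤ Ub f i j
  special : ∀ i j : ℤ, ValidIdx (N : ℤ) (M : ℤ) i j → 0 ≤ j → j ≤ i - 1 →
      f (i - 1) j = f (i - 1) (i - 1) → f i j = f (i - 1) (i - 1) - 1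

def extendAt (f : ℤ → ℤ → ℤ) (p q v : ℤ) : ℤ → ℤ → ℤ :=
  fun i j => if i = p ∧ j = q then v else f i j

section extendAt

variable {f : ℤ → ℤ → ℤ} {p q v i j : ℤ}

theorem extendAt_self : extendAt f p q v p q = v := if_pos ⟨rfl, rfl⟩

theorem extendAt_of_ne (h : ¬(i = p ∧ j = q)) : extendAt f p q v i j = f i j := if_neg h

theorem Lb_extendAt (h : i < p ∨ i = p ∧ j ≤ q) : Lb (extendAt f p q v) i j = Lb f i j := by
  unfold Lb
  rw [extendAt_of_ne (by omega), extendAt_of_ne (by omega), extendAt_of_ne (by omega)]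

theorem Ub_extendAt (h : i < p ∨ i = p ∧ j ≤ q) : Ub (extendAt f p q v) i j = Ub f i j := by
  unfold Ub
  rw [extendAt_of_ne (by omega), extendAt_of_ne (by omega), extendAt_of_ne (by omega)]

end extendAt

theorem le_Lb_add_one (f : ℤ → ℤ → ℤ) (i j : ℤ) : f i j ≤ Lb f i (j + 1) := by
  rw [Lb, add_sub_cancel_right]
  exact le_max_left _ _

theorem Lb_le_Ub {f : ℤ → ℤ → ℤ} {i j : ℤ} (hcol : f (i - 1) (j - 1) ≤ f (i - 1) j)
    (hlo : f (i - 1) (j - 1) - 1 ≤ f i (j - 1)) (hhi : f i (j - 1) ≤ f (i - 1) (j - 1)) :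
    Lb f i j ≤ Ub f i j := by
  unfold Lb Ub
  omega

theorem validIdx_add_one {N M i j : ℤ} (hM : 0 ≤ M) :
    ValidIdx N (M + 1) i j ↔ ValidIdx N M i j ∨ i = N ∧ j = M + 1 := by
  unfold ValidIdx
  omega

theorem ValidIdx.lt_or_eq_and_le {N M i j : ℤ} (h : ValidIdx N M i j) :
    i < N ∨ i = N ∧ j ≤ M := by
  unfold ValidIdx at h
  omega

namespace IsFSeq

variable {n N M : ℕ} {f : ℤ → ℤ → ℤ}

theorem subdiag_eq (hf : IsFSeq n N M f) {i : ℤ} (h1 : 1 ≤ i) (hi : i ≤ N - 1) :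
    f i (i - 1) = f (i - 1) (i - 1) - 1 :=
  hf.special i (i - 1) (Or.inl ⟨by omega, by omega, hi⟩) (by omega) le_rfl rfl

/-- If the diagonal goes up at `i`, the upper bound `f (i+1) (i-1) ≤ f i (i-1)` keeps the left
entry two below the diagonal; if it goes down, `f i (i-1)` meets the diagonal and the special rule
makes both entries equal. -/
theorem le_subdiag (hf : IsFSeq n N M f) {i : ℤ} (h1 : 1 ≤ i) (hi : i ≤ N - 2) :
    f (i + 1) (i - 1) ≤ f (i + 1) i := by
  have hvalid : ValidIdx N M (i + 1) (i - 1) := Or.inl ⟨by omega, by omega, by omega⟩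
  have hsub : f (i + 1) i = f i i - 1 := by
    simpa using hf.subdiag_eq (i := i + 1) (by omega) (by omega)
  have hsub_prev : f i (i - 1) = f (i - 1) (i - 1) - 1 := hf.subdiag_eq h1 (by omega)
  rcases hf.diag_step i h1 (by omega) with hup | hdown
  · have hUb := (hf.bounds (i + 1) (i - 1) hvalid (by omega) (by omega)).2
    rw [Ub, add_sub_cancel_right] at hUb
    have := hUb.trans (min_le_left _ _)
    omega
  · have := hf.special (i + 1) (i - 1) hvalid (by omega) (by omega)
      (by simp only [add_sub_cancel_right]; omega)
    simp only [add_sub_cancel_right] at this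
    omega

theorem le_col_add_one (hf : IsFSeq n N M f) {i j : ℤ} (hj : 0 ≤ j) (hji : j + 2 ≤ i)
    (hi : i ≤ N - 1) : f i j ≤ f i (j + 1) := by
  rcases (by omega : j + 3 ≤ i ∨ i = j + 2) with hlt | rfl
  · exact (le_Lb_add_one f i j).trans
      (hf.bounds i (j + 1) (Or.inl ⟨by omega, by omega, hi⟩) (by omega) (by omega)).1
  · have := hf.le_subdiag (i := j + 1) (by omega) (by omega)
    rwa [add_sub_cancel_right, add_assoc, one_add_one_eq_two] at this

theorem Lb_le_Ub_next (hf : IsFSeq n N M f) (h : (M : ℤ) < N - 2) :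
    Lb f N (M + 1) ≤ Ub f N (M + 1) := by
  have hM := hf.bounds N M (Or.inr ⟨rfl, by omega, le_rfl⟩) (by omega) (by omega)
  have hcol := hf.le_col_add_one (i := N - 1) (j := M) (by omega) (by omega) le_rfl
  unfold Lb Ub at hM
  apply Lb_le_Ub <;> simp only [add_sub_cancel_right] <;> omega

theorem extendAt_next (hf : IsFSeq n N M f) (h : (M : ℤ) < N - 2)
    (hne : f (N - 1) (M + 1) ≠ f (N - 1) (N - 1)) {v : ℤ}
    (hLv : Lb f N (M + 1) ≤ v) (hvU : v ≤ Ub f N (M + 1)) :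
    IsFSeq n N (M + 1) (extendAt f N (M + 1) v) := by
  have hmax : max ((N : ℤ) - 1) ((M + 1 : ℕ) : ℤ) = max ((N : ℤ) - 1) M := by omega
  have hdiag (i : ℤ) : extendAt f N (M + 1) v i i = f i i := extendAt_of_ne (by omega)
  refine ⟨by omega, hf.hN2n, fun i j hij => ?_, fun i j => ?_, fun i hi0 hi => ?_,
    by rw [hdiag]; exact hf.diag_first, fun i hi1 hi => ?_, fun i hi0 hi => ?_,
    fun i j hij hj0 hji => ?_, fun i j hij hj0 hji heq => ?_⟩
  · rw [Nat.cast_succ, validIdx_add_one (by omega), not_or] at hij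
    rw [extendAt_of_ne hij.2]
    exact hf.zero_outside i j hij.1
  · unfold extendAt
    split_ifs
    · exact (hf.nonneg N M).trans ((le_Lb_add_one f N M).trans hLv)
    · exact hf.nonneg i j
  · rw [hmax] at hi
    rw [hdiag]
    exact hf.diag_pos i hi0 hi
  · rw [hmax] at hi
    rw [hdiag, hdiag]
    exact hf.diag_step i hi1 hi
  · rw [hmax] at hi
    rw [hdiag]
    exact hf.diag_bound i hi0 hi
  · rw [Nat.cast_succ, validIdx_add_one (by omega)] at hij
    rcases hij with hold | ⟨rfl, rfl⟩
    · have hpos := hold.lt_or_eq_and_le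
      rw [Lb_extendAt (by omega), Ub_extendAt (by omega), extendAt_of_ne (by omega)]
      exact hf.bounds i j hold hj0 hji
    · rw [Lb_extendAt (by omega), Ub_extendAt (by omega), extendAt_self]
      exact ⟨hLv, hvU⟩
  · rw [Nat.cast_succ, validIdx_add_one (by omega)] at hij
    have hrow : i - 1 < N := by unfold ValidIdx at hij; omega
    have hprev (k : ℤ) : extendAt f N (M + 1) v (i - 1) k = f (i - 1) k :=
      extendAt_of_ne (by omega)
    simp only [hprev] at heq ⊢
    rcases hij with hold | ⟨rfl, rfl⟩
    · have hpos := hold.lt_or_eq_and_le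
      rw [extendAt_of_ne (by omega)]
      exact hf.special i j hold hj0 hji heq
    · exact absurd heq hne

end IsFSeq

/-- extending an `(n,N,M)` F-sequence (with `M < N-2` and
`f_{N-1,M+1} ≠ f_{N-1,N-1}`) at `(N,M+1)` by either `L_f(N,M+1)` or `U_f(N,M+1)`
yields an `(n,N,M+1)` F-sequence. -/
theorem fseq_extend_row (n N M : ℕ) (f : ℤ → ℤ → ℤ)
    (hf : IsFSeq n N M f) (h : (M : ℤ) < (N : ℤ) - 2)
    (hne : f ((N : ℤ) - 1) ((M : ℤ) + 1) ≠ f ((N : ℤ) - 1) ((N : ℤ) - 1)) :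
    Lb f (N : ℤ) ((M : ℤ) + 1) ≤ Ub f (N : ℤ) ((M : ℤ) + 1) ∧
    ∀ v : ℤ, (v = Lb f (N : ℤ) ((M : ℤ) + 1) ∨ v = Ub f (N : ℤ) ((M : ℤ) + 1)) →
      IsFSeq n N (M + 1)
        (fun i j => if i = (N : ℤ) ∧ j = (M : ℤ) + 1 then v else f i j) := by
  have hLU := hf.Lb_le_Ub_next h
  refine ⟨hLU, fun v hv => ?_⟩
  rcases hv with rfl | rfl
  exacts [hf.extendAt_next h hne le_rfl hLU, hf.extendAt_next h hne hLU le_rfl]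
end

section
/- Let f be an (n,N,M) F-sequence with M < N−2 and suppose f_{N−1,M+1} = f_{N−1,N−1}. Then L_f(N,M+1) = f_{N−1,N−1} − 1 ≤ U_f(N,M+1), and extending f by setting f_{N,M+1} = f_{N−1,N−1} − 1 yields an (n,N,M+1) F-sequence. -/
/-! The bounds at `(N, M)` give `f_{N-1,M} - 1 ≤ f_{N,M} ≤ f_{N-1,M}`, and rows increase up to
the subdiagonal, so `f_{N-1,M} ≤ f_{N-1,M+1} = f_{N-1,N-1}`; with the special rule at `(N, M)`
this forces `f_{N,M} ≤ f_{N-1,N-1} - 1`, which evaluates `L_f(N, M+1)` and bounds `U_f(N, M+1)`.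
The extension is again an F-sequence since the new entry satisfies its own constraints and no
constraint at another index reads it. -/

namespace IsFSeq

variable {n N M : ℕ} {f : ℤ → ℤ → ℤ}

theorem le_above (hf : IsFSeq n N M f) {i j : ℤ} (hv : ValidIdx N M i j) (hj0 : 0 ≤ j)
    (hj : j ≤ i - 2) : f i j ≤ f (i - 1) j :=
  (hf.bounds i j hv hj0 hj).2.trans (min_le_left _ _)

theorem above_sub_one_le (hf : IsFSeq n N M f) {i j : ℤ} (hv : ValidIdx N M i j) (hj0 : 0 ≤ j)
    (hj : j ≤ i - 2) : f (i - 1) j - 1 ≤ f i j :=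
  ((le_max_left _ _).trans (le_max_right _ _)).trans (hf.bounds i j hv hj0 hj).1

theorem special_succ (hf : IsFSeq n N M f) {i j : ℤ} (hv : ValidIdx N M (i + 1) j)
    (hj0 : 0 ≤ j) (hj : j ≤ i) (h : f i j = f i i) : f (i + 1) j = f i i - 1 := by
  have h' : f (i + 1 - 1) j = f (i + 1 - 1) (i + 1 - 1) := by rwa [add_sub_cancel_right]
  simpa only [add_sub_cancel_right] using hf.special (i + 1) j hv hj0 (by omega) h'

/-- Below the subdiagonal this is the lower bound `L_f`; the last step, onto the subdiagonal,
follows from the special rule by cases on the diagonal step at `i - 1`. -/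
theorem le_right (hf : IsFSeq n N M f) {i j : ℤ} (hv : ValidIdx N M i (j + 1)) (hj0 : 0 ≤ j)
    (hj : j ≤ i - 2) : f i j ≤ f i (j + 1) := by
  obtain hlt | rfl : j < i - 2 ∨ i = j + 1 + 1 := by omega
  · have h := (le_max_left _ _).trans (hf.bounds i (j + 1) hv (by omega) (by omega)).1
    rwa [add_sub_cancel_right] at h
  have hv' : ValidIdx N M (j + 1 + 1) j := by unfold ValidIdx at hv ⊢; omega
  have hsub : f (j + 1) j = f j j - 1 :=
    hf.special_succ (by unfold ValidIdx at hv ⊢; omega) hj0 le_rfl rfl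
  have hdiag : f (j + 1 + 1) (j + 1) = f (j + 1) (j + 1) - 1 :=
    hf.special_succ hv (by omega) le_rfl rfl
  have hstep := hf.diag_step (j + 1) (by omega) (by unfold ValidIdx at hv; omega)
  rw [add_sub_cancel_right] at hstep
  rcases hstep with hup | hdown
  · have := hf.le_above hv' hj0 (by omega)
    rw [add_sub_cancel_right] at this
    omega
  · have := hf.special_succ hv' hj0 (by omega) (by omega)
    omega

theorem extend_row (hf : IsFSeq n N M f) (hM : (M : ℤ) + 3 ≤ N) {v : ℤ}
    (hL : Lb f N (M + 1) ≤ v) (hU : v ≤ Ub f N (M + 1))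
    (hspecial : f (N - 1) (M + 1) = f (N - 1) (N - 1) → v = f (N - 1) (N - 1) - 1) :
    IsFSeq n N (M + 1) (fun i j => if i = (N : ℤ) ∧ j = (M : ℤ) + 1 then v else f i j) := by
  set g : ℤ → ℤ → ℤ := fun i j => if i = (N : ℤ) ∧ j = (M : ℤ) + 1 then v else f i j
  have hg : ∀ i j : ℤ, ¬(i = N ∧ j = (M : ℤ) + 1) → g i j = f i j := fun i j h => if_neg h
  have hgv : g N (M + 1) = v := if_pos ⟨rfl, rfl⟩
  have hvalid : ∀ i j, ValidIdx N ↑(M + 1) i j ↔ ValidIdx N M i j ∨ (i = N ∧ j = (M : ℤ) + 1) := by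
    intro i j; unfold ValidIdx; push_cast; omega
  have hmax : max ((N : ℤ) - 1) ↑(M + 1) = max ((N : ℤ) - 1) M := by push_cast; omega
  have hLb : ∀ i j, ValidIdx N ↑(M + 1) i j → Lb g i j = Lb f i j := by
    intro i j hv
    rw [hvalid] at hv; unfold ValidIdx at hv
    simp only [Lb, hg i (j - 1) (by omega), hg (i - 1) j (by omega), hg (i - 1) (j - 1) (by omega)]
  have hUb : ∀ i j, ValidIdx N ↑(M + 1) i j → Ub g i j = Ub f i j := by
    intro i j hv
    rw [hvalid] at hv; unfold ValidIdx at hv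
    simp only [Ub, hg i (j - 1) (by omega), hg (i - 1) j (by omega), hg (i - 1) (j - 1) (by omega)]
  have hdiag : ∀ i, g i i = f i i := fun i => hg i i (by omega)
  refine ⟨by omega, hf.hN2n, ?_, ?_, ?_, ?_, ?_, ?_, ?_, ?_⟩
  · intro i j hv
    rw [hvalid, not_or] at hv
    rw [hg i j hv.2, hf.zero_outside i j hv.1]
  · intro i j
    by_cases hij : i = N ∧ j = (M : ℤ) + 1
    · obtain ⟨rfl, rfl⟩ := hij
      rw [hgv]
      have hNM : f N M ≤ Lb f N (M + 1) := by
        rw [Lb, add_sub_cancel_right]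
        exact le_max_left _ _
      exact (hf.nonneg N M).trans (hNM.trans hL)
    · rw [hg i j hij]
      exact hf.nonneg i j
  · intro i hi0 hi
    rw [hdiag]
    exact hf.diag_pos i hi0 (hmax ▸ hi)
  · rw [hdiag]
    exact hf.diag_first
  · intro i hi1 hi
    rw [hdiag, hdiag]
    exact hf.diag_step i hi1 (hmax ▸ hi)
  · intro i hi0 hi
    rw [hdiag]
    exact hf.diag_bound i hi0 (hmax ▸ hi)
  · intro i j hv hj0 hj
    rw [hLb i j hv, hUb i j hv]
    by_cases hij : i = N ∧ j = (M : ℤ) + 1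
    · obtain ⟨rfl, rfl⟩ := hij
      exact hgv ▸ ⟨hL, hU⟩
    · rw [hg i j hij]
      exact hf.bounds i j (((hvalid i j).1 hv).resolve_right hij) hj0 hj
  · intro i j hv hj0 hj hup
    have hvf := (hvalid i j).1 hv
    unfold ValidIdx at hvf
    rw [hdiag, hg (i - 1) j (by omega)] at hup
    rw [hdiag]
    by_cases hij : i = N ∧ j = (M : ℤ) + 1
    · obtain ⟨rfl, rfl⟩ := hij
      exact hgv ▸ hspecial hup
    · rw [hg i j hij]
      exact hf.special i j (((hvalid i j).1 hv).resolve_right hij) hj0 hj hup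

end IsFSeq

/-- extending an `(n,N,M)` F-sequence (with `M < N-2` and
`f_{N-1,M+1} = f_{N-1,N-1}`) at `(N,M+1)` by `f_{N-1,N-1} - 1` yields an
`(n,N,M+1)` F-sequence; moreover this value equals `L_f(N,M+1)` and is at most
`U_f(N,M+1)`. -/
theorem fseq_extend_row_special (n N M : ℕ) (f : ℤ → ℤ → ℤ)
    (hf : IsFSeq n N M f) (h : (M : ℤ) < (N : ℤ) - 2)
    (heq : f ((N : ℤ) - 1) ((M : ℤ) + 1) = f ((N : ℤ) - 1) ((N : ℤ) - 1)) :
    Lb f (N : ℤ) ((M : ℤ) + 1) = f ((N : ℤ) - 1) ((N : ℤ) - 1) - 1 ∧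
    f ((N : ℤ) - 1) ((N : ℤ) - 1) - 1 ≤ Ub f (N : ℤ) ((M : ℤ) + 1) ∧
    IsFSeq n N (M + 1)
      (fun i j => if i = (N : ℤ) ∧ j = (M : ℤ) + 1 then
        f ((N : ℤ) - 1) ((N : ℤ) - 1) - 1 else f i j) := by
  have hM0 : (0 : ℤ) ≤ M := M.cast_nonneg
  have hvNM : ValidIdx N M N M := Or.inr ⟨rfl, hM0, le_rfl⟩
  have hup := hf.le_above hvNM hM0 (by omega)
  have hup' := hf.above_sub_one_le hvNM hM0 (by omega)
  have hrow : f (N - 1) M ≤ f (N - 1) (N - 1) :=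
    heq ▸ hf.le_right (Or.inl ⟨by omega, by omega, le_rfl⟩) hM0 (by omega)
  have hNM : f N M ≤ f (N - 1) (N - 1) - 1 := by
    by_cases hdiag : f (N - 1) M = f (N - 1) (N - 1)
    · exact (hf.special N M hvNM hM0 (by omega) hdiag).le
    · omega
  have hLb : Lb f N (M + 1) = f (N - 1) (N - 1) - 1 := by
    simp only [Lb, add_sub_cancel_right, heq]
    omega
  have hUb : f (N - 1) (N - 1) - 1 ≤ Ub f N (M + 1) := by
    simp only [Ub, add_sub_cancel_right, heq]
    omega
  exact ⟨hLb, hUb, hf.extend_row (by omega) hLb.le hUb fun _ => rfl⟩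
end

section
/- Let f be an (n,N,N−2) F-sequence (so M = N−2). Then extending f by setting f_{N,N−1} = f_{N−1,N−1} − 1 yields an (n,N,N−1) F-sequence. -/
/-!
Changing one entry of an F-sequence only affects the constraints that read that entry. The new
entry `(N, N-1)` is subdiagonal, so the interval constraint (2) does not concern it, while
constraint (3) at `(N, N-1)` always applies (its premise `f_{N-1,N-1} = f_{N-1,N-1}` is trivial)
and forces exactly the value `f_{N-1,N-1} - 1`, which is nonnegative because the diagonal is
positive. All other constraints read only old entries and are inherited from `f`.
-/

def setEntry (f : ℤ → ℤ → ℤ) (a b v : ℤ) : ℤ → ℤ → ℤ :=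
  fun i j => if i = a ∧ j = b then v else f i j

section setEntry

variable {f : ℤ → ℤ → ℤ} {a b v i j : ℤ}

theorem setEntry_apply_same : setEntry f a b v a b = v := if_pos ⟨rfl, rfl⟩

theorem setEntry_apply_of_ne (h : ¬ (i = a ∧ j = b)) : setEntry f a b v i j = f i j :=
  if_neg h

theorem setEntry_apply_of_row_ne (h : i ≠ a) : setEntry f a b v i j = f i j :=
  setEntry_apply_of_ne fun h' => h h'.1

theorem setEntry_apply_diag (hab : a ≠ b) : setEntry f a b v i i = f i i :=
  setEntry_apply_of_ne fun h => hab (h.1 ▸ h.2)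

theorem Lb_setEntry (hrow : a ≠ i - 1) (hleft : ¬ (a = i ∧ b = j - 1)) :
    Lb (setEntry f a b v) i j = Lb f i j := by
  have hl : setEntry f a b v i (j - 1) = f i (j - 1) :=
    setEntry_apply_of_ne fun h => hleft ⟨h.1.symm, h.2.symm⟩
  simp only [Lb, hl, setEntry_apply_of_row_ne hrow.symm]

theorem Ub_setEntry (hrow : a ≠ i - 1) (hleft : ¬ (a = i ∧ b = j - 1)) :
    Ub (setEntry f a b v) i j = Ub f i j := by
  have hl : setEntry f a b v i (j - 1) = f i (j - 1) :=
    setEntry_apply_of_ne fun h => hleft ⟨h.1.symm, h.2.symm⟩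
  simp only [Ub, hl, setEntry_apply_of_row_ne hrow.symm]

end setEntry

theorem validIdx_succ_iff {N M i j : ℤ} (hM : 0 ≤ M) :
    ValidIdx N (M + 1) i j ↔ ValidIdx N M i j ∨ (i = N ∧ j = M + 1) := by
  unfold ValidIdx; omega

theorem ValidIdx.le_right {N M i j : ℤ} (h : ValidIdx N M i j) : i ≤ N := by
  unfold ValidIdx at h; omega

namespace IsFSeq

variable {n N M : ℕ} {f : ℤ → ℤ → ℤ}

theorem setEntry_lastRow (hf : IsFSeq n N M f) (hMN : M + 2 ≤ N) {v : ℤ} (hv : 0 ≤ v)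
    (hbounds : (M : ℤ) + 1 ≤ N - 2 → Lb f N (M + 1) ≤ v ∧ v ≤ Ub f N (M + 1))
    (hspecial : f (N - 1) (M + 1) = f (N - 1) (N - 1) → v = f (N - 1) (N - 1) - 1) :
    IsFSeq n N (M + 1) (setEntry f N (M + 1) v) := by
  have hMN' : (M : ℤ) + 2 ≤ N := by exact_mod_cast hMN
  have hdiag : ∀ i, setEntry f N (M + 1) v i i = f i i := fun _ => setEntry_apply_diag (by omega)
  have hmax : max ((N : ℤ) - 1) ((M + 1 : ℕ) : ℤ) = max ((N : ℤ) - 1) M := by omega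
  refine ⟨by omega, hf.hN2n, ?_, ?_, ?_, ?_, ?_, ?_, ?_, ?_⟩
  · intro i j hij
    push_cast at hij
    rw [validIdx_succ_iff M.cast_nonneg, not_or] at hij
    rw [setEntry_apply_of_ne hij.2, hf.zero_outside i j hij.1]
  · intro i j
    by_cases h : i = N ∧ j = M + 1
    · rw [h.1, h.2, setEntry_apply_same]; exact hv
    · rw [setEntry_apply_of_ne h]; exact hf.nonneg i j
  · intro i hi hiB; rw [hdiag]; exact hf.diag_pos i hi (hmax ▸ hiB)
  · rw [hdiag]; exact hf.diag_first
  · intro i hi hiB; rw [hdiag, hdiag]; exact hf.diag_step i hi (hmax ▸ hiB)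
  · intro i hi hiB; rw [hdiag]; exact hf.diag_bound i hi (hmax ▸ hiB)
  · intro i j hij hj hji
    push_cast at hij
    have hiN := hij.le_right
    have hrow : (N : ℤ) ≠ i - 1 := by omega
    have hleft : ¬ ((N : ℤ) = i ∧ (M : ℤ) + 1 = j - 1) := by unfold ValidIdx at hij; omega
    rw [Lb_setEntry hrow hleft, Ub_setEntry hrow hleft]
    rcases (validIdx_succ_iff M.cast_nonneg).mp hij with hold | ⟨rfl, rfl⟩
    · rw [setEntry_apply_of_ne (by unfold ValidIdx at hold; omega)]
      exact hf.bounds i j hold hj hji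
    · rw [setEntry_apply_same]; exact hbounds hji
  · intro i j hij hj hji hprev
    push_cast at hij
    have hiN := hij.le_right
    rw [setEntry_apply_of_row_ne (by omega), hdiag] at hprev
    rw [hdiag]
    rcases (validIdx_succ_iff M.cast_nonneg).mp hij with hold | ⟨rfl, rfl⟩
    · rw [setEntry_apply_of_ne (by unfold ValidIdx at hold; omega)]
      exact hf.special i j hold hj hji hprev
    · rw [setEntry_apply_same]; exact hspecial hprev

end IsFSeq

/-- extending an `(n,N,N-2)` F-sequence at the subdiagonal entry
`(N,N-1)` by `f_{N-1,N-1} - 1` yields an `(n,N,N-1)` F-sequence. -/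
theorem fseq_extend_subdiagonal (n N M : ℕ) (hM : M + 2 = N) (f : ℤ → ℤ → ℤ)
    (hf : IsFSeq n N M f) :
    IsFSeq n N (M + 1)
      (fun i j => if i = (N : ℤ) ∧ j = (N : ℤ) - 1 then
        f ((N : ℤ) - 1) ((N : ℤ) - 1) - 1 else f i j) := by
  have hsub : (N : ℤ) - 1 = M + 1 := by omega
  have hpos : 0 < f (M + 1) (M + 1) := hf.diag_pos _ (by omega) (by omega)
  rw [hsub]
  exact hf.setEntry_lastRow hM.le (by omega) (fun _ => by omega)
    (fun _ => by rw [hsub])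
end

section
/- Let f be an (n,N,N−1) F-sequence (so M = N−1). If f_{N−1,N−1} > 1, then extending f by setting f_{N,N} = f_{N−1,N−1} − 1 yields an (n,N,N) F-sequence; and if f_{N−1,N−1} < 2n−N−1, then extending f by setting f_{N,N} = f_{N−1,N−1} + 1 yields an (n,N,N) F-sequence. -/
/-- Parity of the diagonal: `f k k ≡ k (mod 2)`. -/
lemma diag_parity (n N M : ℕ) (hM : M + 1 = N) (f : ℤ → ℤ → ℤ)
    (hf : IsFSeq n N M f) :
    ∀ k : ℕ, (k : ℤ) ≤ (N : ℤ) - 1 → f k k % 2 = (k : ℤ) % 2 := by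
  have hMZ : (M : ℤ) = (N : ℤ) - 1 := by push_cast [← hM]; ring
  have hmax : max ((N : ℤ) - 1) (M : ℤ) = (N : ℤ) - 1 := by omega
  intro k
  induction k with
  | zero => intro _; simpa using (by rw [hf.diag_first])
  | succ k ih =>
    intro hk
    have hk' : (k : ℤ) ≤ (N : ℤ) - 1 := by push_cast at hk ⊢; omega
    have hstep := hf.diag_step ((k : ℤ) + 1) (by omega)
      (by rw [hmax]; push_cast at hk; omega)
    have ihh := ih hk'
    push_cast
    have e : ((k : ℤ) + 1) - 1 = (k : ℤ) := by ring
    rw [e] at hstep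
    omega

/-- The common extension lemma. -/
lemma fseq_extend (n N M : ℕ) (hM : M + 1 = N) (f : ℤ → ℤ → ℤ)
    (hf : IsFSeq n N M f) (v : ℤ) (hv1 : 0 < v) (hv2 : v ≤ 2 * (n : ℤ) - (N : ℤ) - 2)
    (hstep : v = f ((N : ℤ) - 1) ((N : ℤ) - 1) + 1 ∨
             v = f ((N : ℤ) - 1) ((N : ℤ) - 1) - 1) :
    IsFSeq n N N (fun i j => if i = (N : ℤ) ∧ j = (N : ℤ) then v else f i j) := by
  have hMZ : (M : ℤ) = (N : ℤ) - 1 := by push_cast [← hM]; ring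
  have hN1 : 1 ≤ (N : ℤ) := by omega
  have hmax : max ((N : ℤ) - 1) (M : ℤ) = (N : ℤ) - 1 := by omega
  have hmaxN : max ((N : ℤ) - 1) (N : ℤ) = (N : ℤ) := by omega
  constructor
  · exact le_refl N
  · exact hf.hN2n
  · -- zero_outside
    intro i j h
    have hnot : ¬ ValidIdx (N : ℤ) (M : ℤ) i j := by
      intro hv; exact h (by unfold ValidIdx at hv ⊢; omega)
    have hne : ¬ (i = (N : ℤ) ∧ j = (N : ℤ)) := by
      intro ⟨hi, hj⟩; exact h (Or.inr ⟨hi, by omega, by omega⟩)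
    simpa [hne] using hf.zero_outside i j hnot
  · -- nonneg
    intro i j
    split
    · omega
    · exact hf.nonneg i j
  · -- diag_pos
    intro i h0 hle
    rw [hmaxN] at hle
    by_cases hi : i = (N : ℤ)
    · rw [if_pos ⟨hi, hi⟩]; exact hv1
    · rw [if_neg (by tauto)]
      exact hf.diag_pos i h0 (by omega)
  · -- diag_first
    rw [if_neg (by omega)]
    exact hf.diag_first
  · -- diag_step
    intro i h1 hle
    rw [hmaxN] at hle
    by_cases hi : i = (N : ℤ)
    · subst hi
      rw [if_pos ⟨rfl, rfl⟩, if_neg (by omega)]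
      tauto
    · rw [if_neg (by tauto), if_neg (by omega)]
      exact hf.diag_step i h1 (by omega)
  · -- diag_bound
    intro i h0 hle
    rw [hmaxN] at hle
    by_cases hi : i = (N : ℤ)
    · rw [if_pos ⟨hi, hi⟩]; omega
    · rw [if_neg (by tauto)]
      exact hf.diag_bound i h0 (by omega)
  · -- bounds
    intro i j hvij h0 hj2
    have hij : i ≤ (N : ℤ) ∧ j ≤ i := by unfold ValidIdx at hvij; omega
    have hold : ValidIdx (N : ℤ) (M : ℤ) i j := by
      unfold ValidIdx at hvij ⊢; omega
    have hb := hf.bounds i j hold h0 hj2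
    simp only [Lb, Ub] at hb ⊢
    rw [if_neg (show ¬(i = (N : ℤ) ∧ j = (N : ℤ)) by omega),
      if_neg (show ¬(i = (N : ℤ) ∧ j - 1 = (N : ℤ)) by omega),
      if_neg (show ¬(i - 1 = (N : ℤ) ∧ j = (N : ℤ)) by omega),
      if_neg (show ¬(i - 1 = (N : ℤ) ∧ j - 1 = (N : ℤ)) by omega)]
    exact hb
  · -- special
    intro i j hvij h0 hj1 heq
    have hij : i ≤ (N : ℤ) ∧ j ≤ i := by unfold ValidIdx at hvij; omega
    have hold : ValidIdx (N : ℤ) (M : ℤ) i j := by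
      unfold ValidIdx at hvij ⊢; omega
    rw [if_neg (show ¬(i - 1 = (N : ℤ) ∧ j = (N : ℤ)) by omega),
      if_neg (show ¬(i - 1 = (N : ℤ) ∧ i - 1 = (N : ℤ)) by omega)] at heq
    rw [if_neg (show ¬(i = (N : ℤ) ∧ j = (N : ℤ)) by omega),
      if_neg (show ¬(i - 1 = (N : ℤ) ∧ i - 1 = (N : ℤ)) by omega)]
    exact hf.special i j hold h0 hj1 heq

/-- extending an `(n,N,N-1)` F-sequence at the diagonal entry `(N,N)`
by `f_{N-1,N-1} - 1` (if `f_{N-1,N-1} > 1`) or by `f_{N-1,N-1} + 1`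
(if `f_{N-1,N-1} < 2n-N-1`) yields an `(n,N,N)` F-sequence. -/
theorem fseq_extend_diagonal (n N M : ℕ) (hM : M + 1 = N) (f : ℤ → ℤ → ℤ)
    (hf : IsFSeq n N M f) :
    (1 < f ((N : ℤ) - 1) ((N : ℤ) - 1) →
      IsFSeq n N N
        (fun i j => if i = (N : ℤ) ∧ j = (N : ℤ) then
          f ((N : ℤ) - 1) ((N : ℤ) - 1) - 1 else f i j)) ∧
    (f ((N : ℤ) - 1) ((N : ℤ) - 1) < 2 * (n : ℤ) - (N : ℤ) - 1 →
      IsFSeq n N N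
        (fun i j => if i = (N : ℤ) ∧ j = (N : ℤ) then
          f ((N : ℤ) - 1) ((N : ℤ) - 1) + 1 else f i j)) := by
  have hMZ : (M : ℤ) = (N : ℤ) - 1 := by push_cast [← hM]; ring
  have hN1 : 1 ≤ (N : ℤ) := by omega
  have hmax : max ((N : ℤ) - 1) (M : ℤ) = (N : ℤ) - 1 := by omega
  have hd := hf.diag_bound ((N : ℤ) - 1) (by omega) (by omega)
  have hpos := hf.diag_pos ((N : ℤ) - 1) (by omega) (by omega)
  have hcast : ((N - 1 : ℕ) : ℤ) = (N : ℤ) - 1 := by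
    have : 1 ≤ N := by omega
    push_cast [Nat.cast_sub this]; ring
  have hp := diag_parity n N M hM f hf (N - 1) (by rw [hcast])
  rw [hcast] at hp
  constructor
  · intro h
    exact fseq_extend n N M hM f hf _ (by omega) (by omega) (Or.inr rfl)
  · intro h
    exact fseq_extend n N M hM f hf _ (by omega) (by omega) (Or.inl rfl)
end

section
/- Let n ≥ 2 and let F be an F-matrix of size 2n−2. Then for all indices with 1 ≤ i ≤ 2n−3 and 0 ≤ j ≤ i−1, if F_{i−1,j} = F_{i−1,i−1} then F_{i,j} = F_{i−1,i−1} − 1. Consequently, the entries of F form an (n, 2n−3, 2n−3) F-sequence. -/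
/-- an F-matrix of size `2n-2` satisfies the "special" condition
(`F_{i-1,j} = F_{i-1,i-1}` forces `F_{i,j} = F_{i-1,i-1} - 1`), and consequently its
entries form an `(n, 2n-3, 2n-3)` F-sequence. -/
theorem fmatrix_is_fseq (n : ℕ) (hn : 2 ≤ n) (F : ℤ → ℤ → ℤ)
    (hF : IsFMatrix n F) :
    (∀ i j : ℤ, 1 ≤ i → i ≤ 2 * (n : ℤ) - 3 → 0 ≤ j → j ≤ i - 1 →
      F (i - 1) j = F (i - 1) (i - 1) → F i j = F (i - 1) (i - 1) - 1) ∧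
    IsFSeq n (2 * n - 3) (2 * n - 3) F := by
  have hn' : (2:ℤ) ≤ (n:ℤ) := by exact_mod_cast hn
  have hNc : ((2*n-3 : ℕ) : ℤ) = 2*(n:ℤ)-3 := by omega
  -- row monotonicity, chained
  have row_le : ∀ i : ℤ, i ≤ 2*(n:ℤ)-3 → ∀ j : ℤ, 0 ≤ j → ∀ k : ℤ, j ≤ k → k ≤ i →
      F i j ≤ F i k := by
    intro i hi j hj k hjk
    refine Int.le_induction (motive := fun k _ => k ≤ i → F i j ≤ F i k) ?_ ?_ k hjk
    · intro _; exact le_refl _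
    · intro k hk ih hki
      have h1 := ih (by omega)
      have h2 := hF.row_mono i (k+1) (by omega) (by omega) hi
      have h3 : F i (k+1-1) = F i k := by norm_num
      omega
  -- the special condition
  have special : ∀ i j : ℤ, 1 ≤ i → i ≤ 2*(n:ℤ)-3 → 0 ≤ j → j ≤ i - 1 →
      F (i-1) j = F (i-1) (i-1) → F i j = F (i-1) (i-1) - 1 := by
    intro i j hi1 hi hj hji hd
    have hsub := hF.subdiag i hi1 hi
    have hle : F i j ≤ F i (i-1) := row_le i hi j hj (i-1) hji (by omega)
    have hlb := hF.col_lb i j hj (by omega) hi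
    omega
  -- diagonal step bound: F i i ≤ F (i+1) (i+1) + 1
  have diag_up : ∀ i : ℤ, 0 ≤ i → i + 1 ≤ 2*(n:ℤ)-3 → F i i ≤ F (i+1) (i+1) + 1 := by
    intro i hi0 hi
    have hsub := hF.subdiag (i+1) (by omega) hi
    have hrm := hF.row_mono (i+1) (i+1) (by omega) le_rfl hi
    have h3 : (i+1) - 1 = i := by ring
    rw [h3] at hsub hrm
    omega
  -- backwards induction for the diagonal bound
  have diag_bd0 : ∀ d : ℕ, ∀ i : ℤ, i = 2*(n:ℤ)-3 - d → 0 ≤ i →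
      F i i ≤ 2*(n:ℤ) - i - 2 := by
    intro d
    induction d with
    | zero =>
      intro i hieq _
      have hieq' : i = 2*(n:ℤ)-3 := by omega
      subst hieq'
      have := hF.diag_last
      omega
    | succ d ih =>
      intro i hieq hi0
      have h1 : F (i+1) (i+1) ≤ 2*(n:ℤ) - (i+1) - 2 := by
        apply ih (i+1) (by push_cast at hieq ⊢; omega) (by omega)
      have h2 := diag_up i hi0 (by push_cast at hieq; omega)
      omega
  have diag_bd : ∀ i : ℤ, 0 ≤ i → i ≤ 2*(n:ℤ)-3 → F i i ≤ 2*(n:ℤ) - i - 2 := by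
    intro i hi0 hi
    refine diag_bd0 (2*(n:ℤ)-3 - i).toNat i ?_ hi0
    have := Int.toNat_of_nonneg (show (0:ℤ) ≤ 2*(n:ℤ)-3-i by omega)
    omega
  -- parity along the diagonal
  have parity : ∀ i : ℤ, 0 ≤ i → i < 2*(n:ℤ)-3 → F i i % 2 = i % 2 := by
    intro i hi
    refine Int.le_induction (motive := fun i _ => i < 2*(n:ℤ)-3 → F i i % 2 = i % 2) ?_ ?_ i hi
    · intro _
      have := hF.diag_first
      omega
    · intro i _ ih hlt
      have hp := ih (by omega)
      have hs := hF.diag_step (i+1) (by omega) hlt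
      have h3 : (i+1) - 1 = i := by ring
      rw [h3] at hs
      omega
  -- value of the penultimate diagonal entry
  have prev2 : F (2*(n:ℤ)-3-1) (2*(n:ℤ)-3-1) = 2 := by
    have h1 := hF.diag_pos (2*(n:ℤ)-3-1) (by omega) (by omega)
    have h2 := diag_bd (2*(n:ℤ)-3-1) (by omega) (by omega)
    have h3 := parity (2*(n:ℤ)-3-1) (by omega) (by omega)
    omega
  have hmax : max (((2*n-3:ℕ):ℤ)-1) ((2*n-3:ℕ):ℤ) = 2*(n:ℤ)-3 := by
    rw [hNc]; exact max_eq_right (by omega)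
  refine ⟨special, ?_⟩
  constructor
  · exact le_rfl
  · omega
  · -- zero_outside
    intro i j h
    refine hF.zero_outside i j ?_
    simp only [ValidIdx, hNc] at h
    omega
  · exact hF.nonneg
  · -- diag_pos
    intro i hi0 hi
    rw [hmax] at hi
    exact hF.diag_pos i hi0 hi
  · exact hF.diag_first
  · -- diag_step
    intro i hi1 hi
    rw [hmax] at hi
    rcases lt_or_eq_of_le hi with hlt | heq
    · exact hF.diag_step i (by omega) hlt
    · right
      subst heq
      rw [hF.diag_last, prev2]
      norm_num
  · -- diag_bound
    intro i hi0 hi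
    rw [hmax] at hi
    exact diag_bd i hi0 hi
  · -- bounds
    intro i j hv hj hji
    simp only [ValidIdx, hNc] at hv
    have hi : i ≤ 2*(n:ℤ)-3 := by omega
    have hi2 : 2 ≤ i := by omega
    have a2 := hF.col_lb i j hj (by omega) hi
    have b1 := hF.col_ub i j hj (by omega) hi
    rcases eq_or_lt_of_le hj with hj0 | hj1
    · -- j = 0
      have hz1 : F i (j-1) = 0 := hF.zero_outside i (j-1) (by omega)
      have hz2 : F (i-1) (j-1) = 0 := hF.zero_outside (i-1) (j-1) (by omega)
      have hnn := hF.nonneg i j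
      constructor
      · exact max_le (by omega) (max_le (by omega) (by omega))
      · exact le_min (by omega) (by omega)
    · -- j ≥ 1
      have a1 := hF.row_mono i j (by omega) (by omega) hi
      have a3 := hF.inner_lb i j hi2 hi (by omega) (by omega)
      have b2 := hF.inner_ub i j hi2 hi (by omega) (by omega)
      constructor
      · exact max_le a1 (max_le (by omega) a3)
      · exact le_min b1 b2
  · -- special
    intro i j hv hj hji hd
    simp only [ValidIdx, hNc] at hv
    exact special i j (by omega) (by omega) hj hji hd
end

section
/- Let n ≥ 2 and let F be an F-matrix of size 2n−2 with associated D- and E-matrices. For each 0 ≤ k ≤ 2n−3 let j_k denote the unique index j with E_{k,j} = 1 (which exists and is unique since each row of E sums to 1). Then each D_{k,j_k} ∈ {1,2} and the product over k = 0, …, 2n−3 of D_{k,j_k} equals 2^{n−1}. -/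
section Aux

variable {n : ℕ} {F : ℤ → ℤ → ℤ}

/-- Splitting off the top term of a sum over an integer interval. -/
private lemma FM.sum_Icc_succ (f : ℤ → ℤ) (b : ℤ) (h : (-1:ℤ) ≤ b) :
    ∑ j ∈ Finset.Icc (0:ℤ) (b + 1), f j = (∑ j ∈ Finset.Icc (0:ℤ) b, f j) + f (b + 1) := by
  have e : Finset.Icc (0:ℤ) (b + 1) = insert (b + 1) (Finset.Icc 0 b) := by
    ext x; simp only [Finset.mem_Icc, Finset.mem_insert]; omega
  rw [e, Finset.sum_insert (by simp)]
  ring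

/-- Telescoping sum over an integer interval. -/
private lemma FM.sum_tele (f : ℤ → ℤ) (b : ℤ) (hb : (-1:ℤ) ≤ b) :
    ∑ j ∈ Finset.Icc (0:ℤ) b, (f j - f (j - 1)) = f b - f (-1) := by
  refine Int.le_induction
    (motive := fun b _ => ∑ j ∈ Finset.Icc (0:ℤ) b, (f j - f (j - 1)) = f b - f (-1)) ?_ ?_ b hb
  · show ∑ j ∈ Finset.Icc (0:ℤ) (-1), (f j - f (j - 1)) = f (-1) - f (-1)
    have e : Finset.Icc (0:ℤ) (-1) = ∅ := by apply Finset.Icc_eq_empty; omega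
    rw [e]; simp
  · intro b hb ih
    show ∑ j ∈ Finset.Icc (0:ℤ) (b + 1), (f j - f (j - 1)) = f (b + 1) - f (-1)
    rw [FM.sum_Icc_succ _ b hb, ih]
    ring_nf

/-- Row partial sums of the D-matrix. -/
private lemma FM.sum_D (hF : IsFMatrix n F) (i k : ℤ) (hk : 0 ≤ k) :
    ∑ j ∈ Finset.Icc 0 k, Dmat F i j = F i k := by
  have h := FM.sum_tele (f := F i) k (by omega)
  simp only [Dmat]
  rw [h, hF.zero_outside i (-1) (Or.inl (by omega))]
  ring

/-- Entries of the E-matrix in range are nonnegative. -/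
private lemma FM.E_nonneg (hn : 2 ≤ n) (hF : IsFMatrix n F) (k j : ℤ)
    (hj0 : 0 ≤ j) (hjk : j ≤ k) (hk : k ≤ 2 * (n : ℤ) - 3) : 0 ≤ Emat F k j := by
  have hm1 : (1:ℤ) ≤ 2 * (n : ℤ) - 3 := by omega
  simp only [Emat, Dmat]
  rcases eq_or_lt_of_le hk with hkm | hkm
  · -- top row : row k+1 of F vanishes
    have h1 : F (k + 1) j = 0 := hF.zero_outside _ _ (by omega)
    have h2 : F (k + 1) (j - 1) = 0 := hF.zero_outside _ _ (by omega)
    rcases eq_or_lt_of_le hj0 with hj | hj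
    · have h3 : F k (j - 1) = 0 := hF.zero_outside _ _ (by omega)
      have := hF.nonneg k j
      omega
    · have := hF.row_mono k j (by omega) (by omega) (by omega)
      omega
  · -- k + 1 ≤ 2n-3
    rcases eq_or_lt_of_le hjk with hje | hjlt
    · -- j = k
      have hsub : F (k + 1) j = F k j - 1 := by
        rw [hje]
        have h := hF.subdiag (k + 1) (by omega) (by omega)
        simpa using h
      rcases eq_or_lt_of_le hj0 with hj | hj
      · -- j = 0
        have h1 : F k (j - 1) = 0 := hF.zero_outside _ _ (by omega)
        have h2 : F (k + 1) (j - 1) = 0 := hF.zero_outside _ _ (by omega)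
        omega
      · have hcl : F k (j - 1) - 1 ≤ F (k + 1) (j - 1) := by
          have h := hF.col_lb (k + 1) (j - 1) (by omega) (by omega) (by omega)
          simpa using h
        omega
    · rcases eq_or_lt_of_le hj0 with hj | hj
      · -- j = 0
        have h1 : F k (j - 1) = 0 := hF.zero_outside _ _ (by omega)
        have h2 : F (k + 1) (j - 1) = 0 := hF.zero_outside _ _ (by omega)
        have h3 : F (k + 1) j ≤ F k j := by
          have h := hF.col_ub (k + 1) j (by omega) (by omega) (by omega)
          simpa using h
        omega
      · -- 1 ≤ j ≤ k - 1
        have h := hF.inner_ub (k + 1) j (by omega) (by omega) (by omega) (by omega)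
        simp only [add_sub_cancel_right] at h
        omega

/-- Entries of the D-matrix in range are nonnegative. -/
private lemma FM.D_nonneg (hF : IsFMatrix n F) (i j : ℤ)
    (hj0 : 0 ≤ j) (hji : j ≤ i) (hi : i ≤ 2 * (n : ℤ) - 3) : 0 ≤ Dmat F i j := by
  simp only [Dmat]
  rcases eq_or_lt_of_le hj0 with hj | hj
  · have h1 : F i (j - 1) = 0 := hF.zero_outside _ _ (by omega)
    have := hF.nonneg i j
    omega
  · have := hF.row_mono i j (by omega) (by omega) hi
    omega

/-- Entries of the D-matrix in range are at most 2. -/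
private lemma FM.D_le_two (hn : 2 ≤ n) (hF : IsFMatrix n F) :
    ∀ k : ℤ, 0 ≤ k → k ≤ 2 * (n : ℤ) - 3 → ∀ j : ℤ, 0 ≤ j → j ≤ k → Dmat F k j ≤ 2 := by
  intro k hk
  refine Int.le_induction
    (motive := fun k _ => k ≤ 2 * (n : ℤ) - 3 → ∀ j : ℤ, 0 ≤ j → j ≤ k → Dmat F k j ≤ 2)
    ?_ ?_ k hk
  · intro _ j hj0 hj1
    have hj : j = 0 := by omega
    subst hj
    have h1 : F 0 (0 - 1) = 0 := hF.zero_outside _ _ (by omega)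
    have h2 := hF.diag_first
    simp only [Dmat]
    omega
  · intro k hk ih hkm j hj0 hjk
    rcases eq_or_lt_of_le hjk with hje | hjlt
    · -- diagonal entry j = k + 1
      subst hje
      have hsub : F (k + 1) k = F k k - 1 := by
        have h := hF.subdiag (k + 1) (by omega) hkm
        simp only [add_sub_cancel_right] at h
        exact h
      simp only [Dmat, add_sub_cancel_right]
      rcases eq_or_lt_of_le hkm with hlast | hmid
      · have hd : F (k + 1) (k + 1) = 1 := by rw [hlast]; exact hF.diag_last
        have hpos := hF.diag_pos k (by omega) (by omega)
        omega
      · have hstep := hF.diag_step (k + 1) (by omega) hmid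
        simp only [add_sub_cancel_right] at hstep
        omega
    · -- j ≤ k : use row above and nonnegativity of E
      have hE := FM.E_nonneg hn hF k j hj0 (by omega) (by omega)
      have hD := ih (by omega) j hj0 (by omega)
      simp only [Emat] at hE
      omega

/-- Each row of the E-matrix sums to 1. -/
private lemma FM.sum_E (hn : 2 ≤ n) (hF : IsFMatrix n F) (k : ℤ)
    (hk0 : 0 ≤ k) (hk : k ≤ 2 * (n : ℤ) - 3) :
    ∑ j ∈ Finset.Icc 0 k, Emat F k j = 1 := by
  simp only [Emat]
  rw [Finset.sum_sub_distrib, FM.sum_D hF k k hk0, FM.sum_D hF (k + 1) k hk0]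
  rcases eq_or_lt_of_le hk with hkm | hkm
  · subst hkm
    have h1 : F (2 * (n:ℤ) - 3 + 1) (2 * (n:ℤ) - 3) = 0 := hF.zero_outside _ _ (by omega)
    rw [h1, hF.diag_last]
    ring
  · have h := hF.subdiag (k + 1) (by omega) (by omega)
    simp only [add_sub_cancel_right] at h
    omega

/-- A finite family of nonnegative integers summing to 1 has a unique entry equal to 1. -/
private lemma FM.exists_unique_one {s : Finset ℤ} {f : ℤ → ℤ}
    (h0 : ∀ j ∈ s, 0 ≤ f j) (h1 : ∑ j ∈ s, f j = 1) :
    ∃! j, j ∈ s ∧ f j = 1 := by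
  have hex : ∃ j ∈ s, f j ≠ 0 := by
    by_contra h
    push_neg at h
    rw [Finset.sum_eq_zero h] at h1
    exact one_ne_zero h1.symm
  obtain ⟨j, hjs, hjne⟩ := hex
  have hle : f j ≤ 1 := h1 ▸ Finset.single_le_sum h0 hjs
  have hfj : f j = 1 := by have := h0 j hjs; omega
  refine ⟨j, ⟨hjs, hfj⟩, ?_⟩
  rintro y ⟨hys, hfy⟩
  by_contra hne
  have hjs' : j ∈ s.erase y := Finset.mem_erase.2 ⟨fun h => hne h.symm, hjs⟩
  have h2 : f j ≤ ∑ x ∈ s.erase y, f x :=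
    Finset.single_le_sum (fun i hi => h0 i (Finset.mem_erase.1 hi).2) hjs'
  have h3 : f y + ∑ x ∈ s.erase y, f x = ∑ x ∈ s, f x := Finset.add_sum_erase s f hys
  omega

/-- Entries other than the distinguished one vanish. -/
private lemma FM.eq_zero_of_ne {s : Finset ℤ} {f : ℤ → ℤ}
    (h0 : ∀ j ∈ s, 0 ≤ f j) (h1 : ∑ j ∈ s, f j = 1) {j0 : ℤ}
    (hj0 : j0 ∈ s) (hf : f j0 = 1) : ∀ j ∈ s, j ≠ j0 → f j = 0 := by
  have h3 : f j0 + ∑ x ∈ s.erase j0, f x = ∑ x ∈ s, f x := Finset.add_sum_erase s f hj0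
  have h4 : ∑ x ∈ s.erase j0, f x = 0 := by omega
  have h5 := (Finset.sum_eq_zero_iff_of_nonneg
    (fun i hi => h0 i (Finset.mem_erase.1 hi).2)).1 h4
  intro j hjs hjne
  exact h5 j (Finset.mem_erase.2 ⟨hjne, hjs⟩)

end Aux

/-- for an F-matrix of size `2n-2`, each row `k` of the associated
E-matrix has a unique index `j_k` with `E_{k,j_k} = 1`; the entries `D_{k,j_k}` lie in
`{1,2}` and their product over `k = 0, …, 2n-3` equals `2^{n-1}`. -/
theorem dmat_product_eq_pow (n : ℕ) (hn : 2 ≤ n) (F : ℤ → ℤ → ℤ)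
    (hF : IsFMatrix n F) :
    (∀ k : ℤ, 0 ≤ k → k ≤ 2 * (n : ℤ) - 3 →
      ∃! j : ℤ, 0 ≤ j ∧ j ≤ k ∧ Emat F k j = 1) ∧
    ∀ J : ℤ → ℤ,
      (∀ k : ℤ, 0 ≤ k → k ≤ 2 * (n : ℤ) - 3 →
        0 ≤ J k ∧ J k ≤ k ∧ Emat F k (J k) = 1) →
      (∀ k : ℤ, 0 ≤ k → k ≤ 2 * (n : ℤ) - 3 →
        Dmat F k (J k) = 1 ∨ Dmat F k (J k) = 2) ∧
      ∏ k ∈ Finset.Icc (0 : ℤ) (2 * (n : ℤ) - 3), Dmat F k (J k) =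
        2 ^ (n - 1) := by
  set m : ℤ := 2 * (n : ℤ) - 3 with hm
  have hm1 : (1:ℤ) ≤ m := by omega
  have hEnn : ∀ k j : ℤ, 0 ≤ j → j ≤ k → k ≤ m → 0 ≤ Emat F k j :=
    fun k j h1 h2 h3 => FM.E_nonneg hn hF k j h1 h2 h3
  have hEsum : ∀ k : ℤ, 0 ≤ k → k ≤ m → ∑ j ∈ Finset.Icc 0 k, Emat F k j = 1 :=
    fun k h1 h2 => FM.sum_E hn hF k h1 h2
  have hFmm : F m m = 1 := by rw [hm]; exact hF.diag_last
  constructor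
  · intro k hk0 hkm
    have h := FM.exists_unique_one (s := Finset.Icc 0 k) (f := Emat F k)
      (fun j hj => hEnn k j (Finset.mem_Icc.1 hj).1 (Finset.mem_Icc.1 hj).2 hkm)
      (hEsum k hk0 hkm)
    simpa [Finset.mem_Icc, and_assoc] using h
  · intro J hJ
    -- the distinguished entries lie in {1,2}
    have hDJ : ∀ k : ℤ, 0 ≤ k → k ≤ m →
        Dmat F k (J k) = 1 ∨ Dmat F k (J k) = 2 := by
      intro k hk0 hkm
      obtain ⟨hJ0, hJk, hE⟩ := hJ k hk0 hkm
      have h2 : Dmat F k (J k) ≤ 2 := FM.D_le_two hn hF k hk0 hkm (J k) hJ0 hJk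
      have h1 : 0 ≤ Dmat F (k + 1) (J k) := by
        rcases eq_or_lt_of_le hkm with hkm' | hkm'
        · have e1 : F (k + 1) (J k) = 0 := hF.zero_outside _ _ (by omega)
          have e2 : F (k + 1) (J k - 1) = 0 := hF.zero_outside _ _ (by omega)
          simp only [Dmat]; omega
        · exact FM.D_nonneg hF (k + 1) (J k) hJ0 (by omega) (by omega)
      simp only [Emat] at hE
      omega
    refine ⟨hDJ, ?_⟩
    set T : ℤ → ℤ := fun k => ∑ j ∈ Finset.Icc 0 k, Dmat F k j * (Dmat F k j - 1)
      with hT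
    -- transition identity for 0 ≤ k ≤ m-1
    have hstep : ∀ k : ℤ, 0 ≤ k → k + 1 ≤ m →
        2 * (Dmat F k (J k) - 1) =
          T k - T (k + 1) + Dmat F (k + 1) (k + 1) * (Dmat F (k + 1) (k + 1) - 1) := by
      intro k hk0 hk1
      obtain ⟨hJ0, hJk, hE⟩ := hJ k hk0 (by omega)
      have hJmem : J k ∈ Finset.Icc (0:ℤ) k := Finset.mem_Icc.2 ⟨hJ0, hJk⟩
      have hzero : ∀ j ∈ Finset.Icc (0:ℤ) k, j ≠ J k → Emat F k j = 0 :=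
        FM.eq_zero_of_ne
          (fun j hj => hEnn k j (Finset.mem_Icc.1 hj).1 (Finset.mem_Icc.1 hj).2 (by omega))
          (hEsum k hk0 (by omega)) hJmem hE
      have hsplit : T (k + 1) =
          (∑ j ∈ Finset.Icc (0:ℤ) k, Dmat F (k + 1) j * (Dmat F (k + 1) j - 1))
            + Dmat F (k + 1) (k + 1) * (Dmat F (k + 1) (k + 1) - 1) := by
        have e : Finset.Icc (0:ℤ) (k + 1) = insert (k + 1) (Finset.Icc 0 k) := by
          ext x; simp only [Finset.mem_Icc, Finset.mem_insert]; omega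
        show ∑ j ∈ Finset.Icc (0:ℤ) (k + 1), Dmat F (k + 1) j * (Dmat F (k + 1) j - 1) = _
        rw [e, Finset.sum_insert (by simp only [Finset.mem_Icc]; omega)]
        ring
      have hkey : ∑ j ∈ Finset.Icc (0:ℤ) k,
          (Dmat F k j * (Dmat F k j - 1) - Dmat F (k + 1) j * (Dmat F (k + 1) j - 1))
          = 2 * (Dmat F k (J k) - 1) := by
        have hval : Dmat F k (J k) * (Dmat F k (J k) - 1)
            - Dmat F (k + 1) (J k) * (Dmat F (k + 1) (J k) - 1)
            = 2 * (Dmat F k (J k) - 1) := by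
          have hup : Dmat F (k + 1) (J k) = Dmat F k (J k) - 1 := by
            simp only [Emat] at hE; omega
          rw [hup]; ring
        rw [Finset.sum_eq_single_of_mem (J k) hJmem ?hz]
        · exact hval
        case hz =>
          intro j hjs hjne
          have h0 := hzero j hjs hjne
          simp only [Emat] at h0
          have he : Dmat F (k + 1) j = Dmat F k j := by omega
          rw [he]; ring
      rw [Finset.sum_sub_distrib] at hkey
      have hTk : T k = ∑ j ∈ Finset.Icc (0:ℤ) k, Dmat F k j * (Dmat F k j - 1) := rfl
      omega
    -- telescoping of T
    have htele1 : ∑ k ∈ Finset.Icc (0:ℤ) (m - 1), (T k - T (k + 1)) = T 0 - T m := by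
      have h : ∑ j ∈ Finset.Icc (0:ℤ) (m - 1), (-(T (j + 1)) - -(T (j - 1 + 1)))
          = -(T (m - 1 + 1)) - -(T (-1 + 1)) :=
        FM.sum_tele (fun j => -(T (j + 1))) (m - 1) (by omega)
      have hco : ∀ j ∈ Finset.Icc (0:ℤ) (m - 1),
          T j - T (j + 1) = -(T (j + 1)) - -(T (j - 1 + 1)) := by
        intro j _
        have e : j - 1 + 1 = j := by ring
        rw [e]; ring
      rw [Finset.sum_congr rfl hco, h]
      have e1 : m - 1 + 1 = m := by ring
      have e2 : (-1 : ℤ) + 1 = 0 := by ring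
      rw [e1, e2]
      ring
    -- diagonal contribution
    have hdiagsum : ∑ k ∈ Finset.Icc (0:ℤ) (m - 1),
        Dmat F (k + 1) (k + 1) * (Dmat F (k + 1) (k + 1) - 1)
        = F (m - 1) (m - 1) + m - 3 := by
      have hsplit : ∑ k ∈ Finset.Icc (0:ℤ) (m - 1),
          Dmat F (k + 1) (k + 1) * (Dmat F (k + 1) (k + 1) - 1)
          = (∑ k ∈ Finset.Icc (0:ℤ) (m - 2),
              Dmat F (k + 1) (k + 1) * (Dmat F (k + 1) (k + 1) - 1))
            + Dmat F m m * (Dmat F m m - 1) := by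
        have e : Finset.Icc (0:ℤ) (m - 1) = insert (m - 1) (Finset.Icc 0 (m - 2)) := by
          ext x; simp only [Finset.mem_Icc, Finset.mem_insert]; omega
        have e2 : m - 1 + 1 = m := by ring
        rw [e, Finset.sum_insert (by simp only [Finset.mem_Icc]; omega), e2]
        ring
      -- the last diagonal D entry is 0 or 1
      have hsubm : F m (m - 1) = F (m - 1) (m - 1) - 1 := hF.subdiag m hm1 (by omega)
      have hposm := hF.diag_pos (m - 1) (by omega) (by omega)
      have hgem : 0 ≤ Dmat F m m := FM.D_nonneg hF m m (by omega) le_rfl (by omega)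
      have hDmm : Dmat F m m = 0 ∨ Dmat F m m = 1 := by
        simp only [Dmat] at hgem ⊢
        omega
      have hDmm0 : Dmat F m m * (Dmat F m m - 1) = 0 := by
        rcases hDmm with h | h <;> rw [h] <;> ring
      -- middle diagonal entries: telescoping of the diagonal of F
      have hmid : ∀ k ∈ Finset.Icc (0:ℤ) (m - 2),
          Dmat F (k + 1) (k + 1) * (Dmat F (k + 1) (k + 1) - 1)
          = (F (k + 1) (k + 1) + k) - (F (k - 1 + 1) (k - 1 + 1) + (k - 1)) := by
        intro k hk
        rw [Finset.mem_Icc] at hk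
        have e : k - 1 + 1 = k := by ring
        rw [e]
        have hsub : F (k + 1) k = F k k - 1 := by
          have h := hF.subdiag (k + 1) (by omega) (by omega)
          simpa using h
        have hstep' := hF.diag_step (k + 1) (by omega) (by omega)
        simp only [add_sub_cancel_right] at hstep'
        have hD : Dmat F (k + 1) (k + 1) = F (k + 1) (k + 1) - F k k + 1 := by
          simp only [Dmat, add_sub_cancel_right]; omega
        rcases hstep' with h | h <;> rw [hD, h] <;> ring
      have htel : ∑ k ∈ Finset.Icc (0:ℤ) (m - 2),
          ((F (k + 1) (k + 1) + k) - (F (k - 1 + 1) (k - 1 + 1) + (k - 1)))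
          = (F (m - 2 + 1) (m - 2 + 1) + (m - 2)) - (F (-1 + 1) (-1 + 1) + (-1)) :=
        FM.sum_tele (fun j => F (j + 1) (j + 1) + j) (m - 2) (by omega)
      rw [hsplit, hDmm0, Finset.sum_congr rfl hmid, htel]
      have e1 : (-1 : ℤ) + 1 = 0 := by ring
      have e2 : m - 2 + 1 = m - 1 := by ring
      rw [e1, e2, hF.diag_first]
      ring
    -- T at the endpoints
    have hT0 : T 0 = 2 := by
      have hD00 : Dmat F 0 0 = 2 := by
        have h1 : F 0 (0 - 1) = 0 := hF.zero_outside _ _ (by omega)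
        have h2 := hF.diag_first
        simp only [Dmat]
        omega
      have : T 0 = ∑ j ∈ Finset.Icc (0:ℤ) 0, Dmat F 0 j * (Dmat F 0 j - 1) := rfl
      rw [this, Finset.Icc_self, Finset.sum_singleton, hD00]
      ring
    have hTm : T m = 0 := by
      have : T m = ∑ j ∈ Finset.Icc (0:ℤ) m, Dmat F m j * (Dmat F m j - 1) := rfl
      rw [this]
      apply Finset.sum_eq_zero
      intro j hj
      rw [Finset.mem_Icc] at hj
      have hge := FM.D_nonneg hF m j hj.1 hj.2 (by omega)
      have hs : ∑ j ∈ Finset.Icc (0:ℤ) m, Dmat F m j = F m m := FM.sum_D hF m m (by omega)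
      have hsingle := Finset.single_le_sum
        (f := Dmat F m) (s := Finset.Icc 0 m)
        (fun i hi => FM.D_nonneg hF m i (Finset.mem_Icc.1 hi).1 (Finset.mem_Icc.1 hi).2
          (by omega))
        (Finset.mem_Icc.2 ⟨hj.1, hj.2⟩)
      have hle : Dmat F m j ≤ 1 := by omega
      have : Dmat F m j = 0 ∨ Dmat F m j = 1 := by omega
      rcases this with h | h <;> rw [h] <;> ring
    -- summing the transition identities over k ∈ [0, m-1]
    have hsum' : 2 * (∑ k ∈ Finset.Icc (0:ℤ) (m - 1), (Dmat F k (J k) - 1))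
        = F (m - 1) (m - 1) + m - 1 := by
      have h1 : ∑ k ∈ Finset.Icc (0:ℤ) (m - 1), 2 * (Dmat F k (J k) - 1)
          = ∑ k ∈ Finset.Icc (0:ℤ) (m - 1),
              ((T k - T (k + 1)) + Dmat F (k + 1) (k + 1) * (Dmat F (k + 1) (k + 1) - 1)) := by
        apply Finset.sum_congr rfl
        intro k hk
        rw [Finset.mem_Icc] at hk
        rw [hstep k hk.1 (by omega)]
      rw [Finset.sum_add_distrib, htele1, hdiagsum, hT0, hTm, ← Finset.mul_sum] at h1
      omega
    -- the subdiagonal value of F forced by parity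
    have hFm1 : F (m - 1) (m - 1) = 2 := by
      have hpos := hF.diag_pos (m - 1) (by omega) (by omega)
      have hsub : F m (m - 1) = F (m - 1) (m - 1) - 1 := hF.subdiag m hm1 (by omega)
      have hge : 0 ≤ Dmat F m m := FM.D_nonneg hF m m (by omega) le_rfl (by omega)
      simp only [Dmat] at hge
      omega
    have hS' : ∑ k ∈ Finset.Icc (0:ℤ) (m - 1), (Dmat F k (J k) - 1) = (n : ℤ) - 1 := by
      rw [hFm1] at hsum'
      omega
    -- the last row contributes a factor 1
    have hDm1 : Dmat F m (J m) = 1 := by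
      obtain ⟨hJ0, hJk, hE⟩ := hJ m (by omega) le_rfl
      have e1 : F (m + 1) (J m) = 0 := hF.zero_outside _ _ (by omega)
      have e2 : F (m + 1) (J m - 1) = 0 := hF.zero_outside _ _ (by omega)
      simp only [Emat, Dmat] at hE ⊢
      omega
    have hS : ∑ k ∈ Finset.Icc (0:ℤ) m, (Dmat F k (J k) - 1) = (n : ℤ) - 1 := by
      have e : Finset.Icc (0:ℤ) m = insert m (Finset.Icc 0 (m - 1)) := by
        ext x; simp only [Finset.mem_Icc, Finset.mem_insert]; omega
      rw [e, Finset.sum_insert (by simp only [Finset.mem_Icc]; omega), hS', hDm1]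
      ring
    -- convert to the product statement
    have hfac : ∀ k ∈ Finset.Icc (0:ℤ) m,
        Dmat F k (J k) = 2 ^ ((Dmat F k (J k) - 1).toNat) := by
      intro k hk
      rw [Finset.mem_Icc] at hk
      rcases hDJ k hk.1 hk.2 with h | h <;> rw [h] <;> norm_num
    rw [Finset.prod_congr rfl hfac, Finset.prod_pow_eq_pow_sum]
    congr 1
    have hcast : ((∑ k ∈ Finset.Icc (0:ℤ) m, (Dmat F k (J k) - 1).toNat : ℕ) : ℤ)
        = (n : ℤ) - 1 := by
      push_cast
      rw [← hS]
      apply Finset.sum_congr rfl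
      intro k hk
      rw [Finset.mem_Icc] at hk
      rcases hDJ k hk.1 hk.2 with h | h <;> rw [h] <;> norm_num
    omega
end

section
/- Let n ≥ 2 and let (d_0, …, d_{2n−3}) be a sequence of positive integers with d_0 = 2, d_{2n−3} = 1, and |d_k − d_{k−1}| = 1 for all 1 ≤ k ≤ 2n−3. Then the number of F-matrices F of size 2n−2 whose diagonal satisfies F_{k,k} = d_k for all 0 ≤ k ≤ 2n−3 equals (∏_{k=0}^{2n−3} d_k)/2^{n−1}. -/
open Finset

namespace FMaux

lemma mono_chain {f : ℤ → ℤ} {N a b : ℤ} (h : ∀ k, 1 ≤ k → k ≤ N → f (k-1) ≤ f k)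
    (ha : 0 ≤ a) (hab : a ≤ b) (hb : b ≤ N) : f a ≤ f b := by
  have H : ∀ q : ℕ, a + q ≤ N → f a ≤ f (a + q) := by
    intro q
    induction q with
    | zero => intro _; simp
    | succ p ih =>
        intro hb'
        have hc : (a + (p + 1 : ℕ) : ℤ) = (a + p) + 1 := by push_cast; ring
        rw [hc] at hb' ⊢
        have h1 : f (a + p) ≤ f (a + p + 1) := by
          have h2 := h (a + p + 1) (by omega) (by omega)
          have e : (a + (p:ℤ) + 1 - 1) = a + p := by omega
          rw [e] at h2
          exact h2
        exact le_trans (ih (by omega)) h1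
  have hq : b = a + ((b - a).toNat : ℤ) := by omega
  rw [hq]
  exact H _ (by omega)

noncomputable def vals (i : ℤ) (r : ℤ → ℤ) : Finset ℤ := (Finset.Icc 0 i).image r

lemma mem_vals {i : ℤ} {r : ℤ → ℤ} {w : ℤ} :
    w ∈ vals i r ↔ ∃ k, 0 ≤ k ∧ k ≤ i ∧ r k = w := by
  simp [vals, Finset.mem_image, Finset.mem_Icc, and_assoc]

noncomputable def Vd (d : ℤ → ℤ) (i : ℤ) (r : ℤ → ℤ) : Finset ℤ := vals i r ∩ Finset.Icc 1 (d i - 1)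

noncomputable def Cd (d : ℤ → ℤ) (i : ℤ) (r : ℤ → ℤ) : Finset ℤ := vals i r ∩ Finset.Icc 1 (d i)

lemma mem_Vd {d : ℤ → ℤ} {i : ℤ} {r : ℤ → ℤ} {w : ℤ} :
    w ∈ Vd d i r ↔ (∃ k, 0 ≤ k ∧ k ≤ i ∧ r k = w) ∧ 1 ≤ w ∧ w ≤ d i - 1 := by
  simp [Vd, mem_vals, Finset.mem_Icc]

lemma mem_Cd {d : ℤ → ℤ} {i : ℤ} {r : ℤ → ℤ} {w : ℤ} :
    w ∈ Cd d i r ↔ (∃ k, 0 ≤ k ∧ k ≤ i ∧ r k = w) ∧ 1 ≤ w ∧ w ≤ d i := by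
  simp [Cd, mem_vals, Finset.mem_Icc]

structure ValidRow (d : ℤ → ℤ) (i : ℤ) (r : ℤ → ℤ) : Prop where
  zero : ∀ k, k < 0 ∨ i < k → r k = 0
  nonneg : ∀ k, 0 ≤ r k
  mono : ∀ k, 1 ≤ k → k ≤ i → r (k-1) ≤ r k
  top : r i = d i
  sparse : ∀ w, 0 ≤ w → w < d i →
      (w = 0 ∨ ∃ k, 0 ≤ k ∧ k ≤ i ∧ r k = w) ∨ (∃ k, 0 ≤ k ∧ k ≤ i ∧ r k = w + 1)

structure NextRow (d : ℤ → ℤ) (i : ℤ) (r s : ℤ → ℤ) : Prop where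
  zero : ∀ k, k < 0 ∨ i + 1 < k → s k = 0
  nonneg : ∀ k, 0 ≤ s k
  mono : ∀ k, 1 ≤ k → k ≤ i + 1 → s (k-1) ≤ s k
  col : ∀ k, 0 ≤ k → k ≤ i → r k - 1 ≤ s k ∧ s k ≤ r k
  diag : s (i+1) = d (i+1)
  sub : s i = d i - 1
  inner : ∀ j, 1 ≤ j → j ≤ i - 1 → s (j-1) + r j - r (j-1) - 1 ≤ s j ∧ s j ≤ s (j-1) + r j - r (j-1)

def stepRow (d : ℤ → ℤ) (i : ℤ) (r : ℤ → ℤ) (v : ℤ) : ℤ → ℤ := fun k =>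
  if k = i + 1 then d (i+1)
  else if k = i then d i - 1
  else if 0 ≤ k ∧ k ≤ i - 1 then (if v ≤ r k then r k - 1 else r k) else 0

section
variable {d : ℤ → ℤ} {i : ℤ} {r : ℤ → ℤ}

lemma le_top (hr : ValidRow d i r) {k : ℤ} (h0 : 0 ≤ k) (hk : k ≤ i) : r k ≤ d i :=
  hr.top ▸ mono_chain hr.mono h0 hk le_rfl

lemma stepRow_top : stepRow d i r v (i+1) = d (i+1) := by simp [stepRow]

lemma stepRow_sub (hi : 0 ≤ i) : stepRow d i r v i = d i - 1 := by
  have h1 : ¬ (i = i + 1) := by omega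
  simp [stepRow, h1]

lemma stepRow_lo (hi : 0 ≤ i) {k : ℤ} (h0 : 0 ≤ k) (hk : k ≤ i - 1) :
    stepRow d i r v k = if v ≤ r k then r k - 1 else r k := by
  have h1 : ¬ (k = i + 1) := by omega
  have h2 : ¬ (k = i) := by omega
  simp [stepRow, h1, h2, h0, hk]

lemma stepRow_out (hi : 0 ≤ i) {k : ℤ} (hk : k < 0 ∨ i + 1 < k) : stepRow d i r v k = 0 := by
  have h1 : ¬ (k = i + 1) := by omega
  have h2 : ¬ (k = i) := by omega
  have h3 : ¬ (0 ≤ k ∧ k ≤ i - 1) := by omega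
  unfold stepRow; rw [if_neg h1, if_neg h2, if_neg h3]

lemma step_is_next (hr : ValidRow d i r) (hi : 0 ≤ i) (hd1 : 1 ≤ d (i+1))
    (hdd : d i - 1 ≤ d (i+1)) {v : ℤ} (hv : v ∈ Cd d i r) :
    NextRow d i r (stepRow d i r v) := by
  obtain ⟨⟨k₀, hk₀0, hk₀i, hk₀⟩, hv1, hvd⟩ := mem_Cd.1 hv
  constructor
  · exact fun k hk => stepRow_out hi hk
  · intro k
    rcases lt_trichotomy k i with h | h | h
    · by_cases h0 : 0 ≤ k
      · rw [stepRow_lo hi h0 (by omega)]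
        have := hr.nonneg k
        split <;> omega
      · rw [stepRow_out hi (by omega)]
    · subst h; rw [stepRow_sub hi]
      have := le_top hr hk₀0 hk₀i; omega
    · by_cases h1 : k = i + 1
      · subst h1; rw [stepRow_top]; omega
      · rw [stepRow_out hi (by omega)]
  · intro k hk1 hki
    rcases eq_or_lt_of_le hki with h | h
    · -- k = i+1
      rw [show k - 1 = i by omega, show k = i + 1 by omega, stepRow_top, stepRow_sub hi]; omega
    · rcases eq_or_lt_of_le (show k ≤ i by omega) with h2 | h2
      · -- k = i
        rw [show k - 1 = i - 1 by omega, show k = i by omega, stepRow_sub hi,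
          stepRow_lo hi (by omega) (by omega)]
        have hmono : r (i-1) ≤ r i := by
          have := hr.mono i (by omega) le_rfl; omega
        rw [hr.top] at hmono
        split <;> omega
      · -- k ≤ i - 1
        rw [stepRow_lo hi (by omega) (by omega), stepRow_lo hi (by omega) (by omega)]
        have hmono : r (k-1) ≤ r k := hr.mono k (by omega) (by omega)
        split <;> split <;> omega
  · intro k h0 hki
    rcases eq_or_lt_of_le hki with h | h
    · rw [h, stepRow_sub hi, hr.top]; omega
    · rw [stepRow_lo hi h0 (by omega)]
      split <;> omega
  · exact stepRow_top
  · exact stepRow_sub hi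
  · intro j hj1 hji
    rw [stepRow_lo hi (by omega) (by omega), stepRow_lo hi (by omega) (by omega)]
    have hmono : r (j-1) ≤ r j := hr.mono j (by omega) (by omega)
    split <;> split <;> omega

lemma next_is_step (hr : ValidRow d i r) (hi : 0 ≤ i) {s : ℤ → ℤ}
    (hs : NextRow d i r s) : ∃ v ∈ Cd d i r, s = stepRow d i r v := by
  have hd1 : 1 ≤ d i := by have := hs.nonneg i; rw [hs.sub] at this; omega
  -- epsilon monotone
  have emono : ∀ a b, 0 ≤ a → a ≤ b → b ≤ i - 1 → r a - s a ≤ r b - s b := by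
    intro a b ha hab hb
    have h' : ∀ k, 1 ≤ k → k ≤ i - 1 → r (k-1) - s (k-1) ≤ r k - s k := by
      intro k hk1 hk2; have := hs.inner k hk1 hk2; omega
    exact mono_chain (f := fun k => r k - s k) (N := i - 1) h' ha hab hb
  have smono : ∀ a b, 0 ≤ a → a ≤ b → b ≤ i + 1 → s a ≤ s b :=
    fun a b ha hab hb => mono_chain hs.mono ha hab hb
  have rmono : ∀ a b, 0 ≤ a → a ≤ b → b ≤ i → r a ≤ r b :=
    fun a b ha hab hb => mono_chain hr.mono ha hab hb
  set D := (Finset.Icc (0:ℤ) (i-1)).filter (fun k => s k < r k) with hD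
  by_cases hne : D.Nonempty
  · set K := D.min' hne with hK
    have hKmem : K ∈ D := Finset.min'_mem _ _
    have hKrange : 0 ≤ K ∧ K ≤ i - 1 := by
      have := Finset.mem_filter.1 hKmem
      have := Finset.mem_Icc.1 this.1
      exact this
    have hKdec : s K < r K := (Finset.mem_filter.1 hKmem).2
    have hKeps : s K = r K - 1 := by
      have := hs.col K hKrange.1 (by omega); omega
    refine ⟨r K, mem_Cd.2 ⟨⟨K, hKrange.1, by omega, rfl⟩, ?_, le_top hr hKrange.1 (by omega)⟩, ?_⟩
    · have := hs.nonneg K; omega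
    · funext k
      by_cases hk1 : k = i + 1
      · rw [hk1, stepRow_top, hs.diag]
      · by_cases hk2 : k = i
        · rw [hk2, stepRow_sub hi, hs.sub]
        · by_cases hk3 : 0 ≤ k ∧ k ≤ i - 1
          · rw [stepRow_lo hi hk3.1 hk3.2]
            by_cases hkK : K ≤ k
            · have h1 : r K ≤ r k := rmono K k hKrange.1 hkK (by omega)
              have h2 : r K - s K ≤ r k - s k := emono K k hKrange.1 hkK hk3.2
              have h3 := hs.col k hk3.1 (by omega)
              rw [if_pos h1]; omega
            · -- k < K : not decremented, and r k < r K
              have hnotD : k ∉ D := fun hmem => by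
                have := Finset.min'_le D k hmem; omega
              have hsk : s k = r k := by
                have h3 := hs.col k hk3.1 (by omega)
                by_contra hne2
                exact hnotD (Finset.mem_filter.2 ⟨Finset.mem_Icc.2 ⟨hk3.1, hk3.2⟩, by omega⟩)
              have hlt : r k < r K := by
                rcases eq_or_lt_of_le (rmono k K hk3.1 (by omega) (by omega)) with h | h
                · exfalso
                  have : s k ≤ s K := smono k K hk3.1 (by omega) (by omega)
                  omega
                · exact h
              rw [if_neg (by omega)]; omega
          · rw [stepRow_out hi (by omega), hs.zero k (by omega)]
  · -- no decrement: v = d i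
    refine ⟨d i, mem_Cd.2 ⟨⟨i, hi, le_rfl, hr.top⟩, hd1, le_rfl⟩, ?_⟩
    funext k
    by_cases hk1 : k = i + 1
    · rw [hk1, stepRow_top, hs.diag]
    · by_cases hk2 : k = i
      · rw [hk2, stepRow_sub hi, hs.sub]
      · by_cases hk3 : 0 ≤ k ∧ k ≤ i - 1
        · rw [stepRow_lo hi hk3.1 hk3.2]
          have hsk : s k = r k := by
            have h3 := hs.col k hk3.1 (by omega)
            by_contra hne2
            exact hne ⟨k, Finset.mem_filter.2 ⟨Finset.mem_Icc.2 ⟨hk3.1, hk3.2⟩, by omega⟩⟩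
          have hlt : r k < d i := by
            rcases eq_or_lt_of_le (le_top hr hk3.1 (by omega)) with h | h
            · exfalso
              have : s k ≤ s i := smono k i hk3.1 (by omega) (by omega)
              rw [hs.sub] at this; omega
            · exact h
          rw [if_neg (by omega)]; omega
        · rw [stepRow_out hi (by omega), hs.zero k (by omega)]

lemma step_inj (hr : ValidRow d i r) (hi : 0 ≤ i) {v v' : ℤ} (hv : v ∈ Cd d i r)
    (hv' : v' ∈ Cd d i r) (h : stepRow d i r v = stepRow d i r v') : v = v' := by
  by_contra hne
  -- wlog v < v'
  have key : ∀ a b : ℤ, a ∈ Cd d i r → b ∈ Cd d i r → a < b →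
      stepRow d i r a = stepRow d i r b → False := by
    intro a b ha hb hab heq
    obtain ⟨⟨k₀, hk₀0, hk₀i, hk₀⟩, ha1, had⟩ := mem_Cd.1 ha
    obtain ⟨⟨k₁, hk₁0, hk₁i, hk₁⟩, hb1, hbd⟩ := mem_Cd.1 hb
    rcases eq_or_lt_of_le hk₀i with h2 | h2
    · -- a = d i
      rw [h2] at hk₀; rw [hr.top] at hk₀; omega
    · have := congrFun heq k₀
      rw [stepRow_lo hi hk₀0 (by omega), stepRow_lo hi hk₀0 (by omega)] at this
      rw [hk₀] at this
      rw [if_pos (le_refl a)] at this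
      rw [if_neg (by omega)] at this
      omega
  rcases lt_trichotomy v v' with h1 | h1 | h1
  · exact key v v' hv hv' h1 h
  · exact hne h1
  · exact key v' v hv' hv h1 h.symm

end

end FMaux

namespace FMaux
section
variable {d : ℤ → ℤ} {i : ℤ} {r : ℤ → ℤ}

lemma step_valid (hr : ValidRow d i r) (hi : 0 ≤ i) (hd1 : 1 ≤ d (i+1))
    (hdd : d i - 1 ≤ d (i+1)) (hdd2 : d (i+1) ≤ d i + 1) {v : ℤ} (hv : v ∈ Cd d i r) :
    ValidRow d (i+1) (stepRow d i r v) := by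
  have hnext := step_is_next hr hi hd1 hdd hv
  obtain ⟨⟨k₀, hk₀0, hk₀i, hk₀⟩, hv1, hvd⟩ := mem_Cd.1 hv
  constructor
  · intro k hk; exact stepRow_out hi (by omega)
  · exact hnext.nonneg
  · intro k hk1 hk2; exact hnext.mono k hk1 hk2
  · exact stepRow_top
  · -- sparseness
    intro w hw0 hw
    by_cases hbig : d i - 1 ≤ w
    · -- w = d i - 1 or w = d i
      rcases eq_or_lt_of_le hbig with h | h
      · exact Or.inl (Or.inr ⟨i, by omega, by omega, by rw [stepRow_sub hi]; omega⟩)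
      · -- w ≥ d i, w < d (i+1) ≤ d i + 1 so w = d i and d (i+1) = d i + 1
        refine Or.inr ⟨i+1, by omega, by omega, by rw [stepRow_top]; omega⟩
    · -- w ≤ d i - 2
      by_cases hcase : w + 1 < v
      · -- low range : values below v unchanged
        rcases hr.sparse w hw0 (by omega) with (h0 | ⟨k, hk0, hki, hk⟩) | ⟨k, hk0, hki, hk⟩
        · exact Or.inl (Or.inl h0)
        · refine Or.inl (Or.inr ⟨k, hk0, by omega, ?_⟩)
          have hklt : k ≤ i - 1 := by
            by_contra hc
            have : k = i := by omega
            rw [this, hr.top] at hk; omega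
          rw [stepRow_lo hi hk0 hklt, if_neg (by omega)]; exact hk
        · refine Or.inr ⟨k, hk0, by omega, ?_⟩
          have hklt : k ≤ i - 1 := by
            by_contra hc
            have : k = i := by omega
            rw [this, hr.top] at hk; omega
          rw [stepRow_lo hi hk0 hklt, if_neg (by omega)]; exact hk
      · -- v ≤ w + 1 : use sparseness at w+1
        rcases hr.sparse (w+1) (by omega) (by omega) with (h0 | ⟨k, hk0, hki, hk⟩) | ⟨k, hk0, hki, hk⟩
        · omega
        · -- r hits w+1 < d i, so at k ≤ i-1; shifted to w
          refine Or.inl (Or.inr ⟨k, hk0, by omega, ?_⟩)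
          have hklt : k ≤ i - 1 := by
            by_contra hc
            have : k = i := by omega
            rw [this, hr.top] at hk; omega
          rw [stepRow_lo hi hk0 hklt, if_pos (by omega)]; omega
        · -- r hits w+2
          by_cases htop : w + 2 = d i
          · exact Or.inr ⟨i, by omega, by omega, by rw [stepRow_sub hi]; omega⟩
          · refine Or.inr ⟨k, hk0, by omega, ?_⟩
            have hklt : k ≤ i - 1 := by
              by_contra hc
              have : k = i := by omega
              rw [this, hr.top] at hk; omega
            rw [stepRow_lo hi hk0 hklt, if_pos (by omega)]; omega

lemma step_V (hr : ValidRow d i r) (hi : 0 ≤ i)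
    {v : ℤ} (hv : v ∈ Cd d i r) :
    Vd d (i+1) (stepRow d i r v) =
      (((Vd d i r).filter (· < v) ∪ ((Cd d i r).filter (v ≤ ·)).image (· - 1)).filter
        (fun w => 1 ≤ w ∧ w ≤ d (i+1) - 1)) := by
  obtain ⟨⟨k₀, hk₀0, hk₀i, hk₀⟩, hv1, hvd⟩ := mem_Cd.1 hv
  ext w
  simp only [mem_Vd, mem_Cd, Finset.mem_filter, Finset.mem_union, Finset.mem_image]
  constructor
  · rintro ⟨⟨k, hk0, hki, hk⟩, hw1, hwd⟩
    refine ⟨?_, hw1, hwd⟩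
    by_cases hk1 : k = i + 1
    · rw [hk1, stepRow_top] at hk; omega
    · by_cases hk2 : k = i
      · rw [hk2, stepRow_sub hi] at hk
        exact Or.inr ⟨d i, ⟨⟨⟨i, hi, le_rfl, hr.top⟩, by omega, le_rfl⟩, by omega⟩, by omega⟩
      · rw [stepRow_lo hi hk0 (by omega)] at hk
        by_cases hle : v ≤ r k
        · rw [if_pos hle] at hk
          exact Or.inr ⟨r k, ⟨⟨⟨k, hk0, by omega, rfl⟩, by omega,
            le_top hr hk0 (by omega)⟩, hle⟩, by omega⟩
        · rw [if_neg hle] at hk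
          have hkd : r k ≤ d i := le_top hr hk0 (by omega)
          have hkdi : r k < d i := by
            rcases eq_or_lt_of_le hkd with h | h
            · omega
            · exact h
          exact Or.inl ⟨⟨⟨k, hk0, by omega, hk⟩, hw1, by omega⟩, by omega⟩
  · rintro ⟨hA | ⟨u, ⟨⟨⟨k, hk0, hki, hk⟩, h1, h2⟩, huge⟩, huw⟩, hw1, hwd⟩
    · obtain ⟨⟨⟨k, hk0, hki, hk⟩, h1, h2⟩, hwlt⟩ := hA
      have hklt : k ≤ i - 1 := by
        by_contra hc
        have : k = i := by omega
        rw [this, hr.top] at hk; omega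
      refine ⟨⟨k, hk0, by omega, ?_⟩, hw1, hwd⟩
      rw [stepRow_lo hi hk0 hklt, if_neg (by omega)]; exact hk
    · refine ⟨?_, hw1, hwd⟩
      by_cases htop : u = d i
      · exact ⟨i, by omega, by omega, by rw [stepRow_sub hi]; omega⟩
      · have hklt : k ≤ i - 1 := by
          by_contra hc
          have : k = i := by omega
          rw [this, hr.top] at hk; omega
        exact ⟨k, hk0, by omega, by rw [stepRow_lo hi hk0 hklt, if_pos (by omega)]; omega⟩

lemma di_notmem_Vd : d i ∉ Vd d i r := by
  intro h; obtain ⟨_, _, h2⟩ := mem_Vd.1 h; omega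

lemma Cd_eq_insert (hr : ValidRow d i r) (hi : 0 ≤ i) (hd1 : 1 ≤ d i) :
    Cd d i r = insert (d i) (Vd d i r) := by
  ext u
  simp only [mem_Cd, mem_Vd, Finset.mem_insert]
  constructor
  · rintro ⟨hh, h1, h2⟩
    rcases eq_or_lt_of_le h2 with h | h
    · exact Or.inl h
    · exact Or.inr ⟨hh, h1, by omega⟩
  · rintro (h | ⟨hh, h1, h2⟩)
    · exact ⟨⟨i, hi, le_rfl, by rw [hr.top, h]⟩, by omega, by omega⟩
    · exact ⟨hh, h1, by omega⟩

lemma card_step (hr : ValidRow d i r) (hi : 0 ≤ i) {v : ℤ} (hv : v ∈ Cd d i r)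
    (hd1 : 1 ≤ d (i+1)) (hcase : d (i+1) = d i + 1 ∨ d (i+1) = d i - 1) :
    ((Vd d (i+1) (stepRow d i r v)).card : ℤ)
      = (Vd d i r).card + (if d (i+1) = d i + 1 then 1 else 0)
        - (if v - 1 ∈ insert 0 (Vd d i r) then 1 else 0) := by
  obtain ⟨⟨k₀, hk₀0, hk₀i, hk₀⟩, hv1, hvd⟩ := mem_Cd.1 hv
  have hdi1 : 1 ≤ d i := by omega
  set Vs := Vd d i r with hVs
  set Cs := Cd d i r with hCs
  set A := Vs.filter (· < v) with hA
  set B := (Cs.filter (v ≤ ·)).image (· - 1) with hB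
  have hinj : Function.Injective (fun x : ℤ => x - 1) := fun a b h => by
    simpa using h
  have hBcard : B.card = (Cs.filter (v ≤ ·)).card := Finset.card_image_of_injective _ hinj
  have hdiV : d i ∉ Vs := di_notmem_Vd
  have hCins : Cs = insert (d i) Vs := Cd_eq_insert hr hi hdi1
  have hfilt : Cs.filter (v ≤ ·) = insert (d i) (Vs.filter (fun w => ¬ w < v)) := by
    rw [hCins]
    rw [Finset.filter_insert, if_pos hvd]
    congr 1
    apply Finset.filter_congr
    intro w _
    simp [not_lt]
  have hBcard2 : B.card = (Vs.filter (fun w => ¬ w < v)).card + 1 := by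
    rw [hBcard, hfilt, Finset.card_insert_of_notMem (fun hmem => hdiV (Finset.mem_filter.1 hmem).1)]
  have hABsum : A.card + B.card = Vs.card + 1 := by
    rw [hBcard2, hA]
    have := Finset.card_filter_add_card_filter_not (s := Vs) (p := (· < v))
    omega
  have hABint : A ∩ B = if v - 1 ∈ Vs then {v-1} else ∅ := by
    ext w
    simp only [Finset.mem_inter, hA, hB, Finset.mem_filter, Finset.mem_image]
    constructor
    · rintro ⟨⟨hwV, hwlt⟩, u, ⟨huC, huge⟩, huw⟩
      have : w = v - 1 := by omega
      rw [if_pos (this ▸ hwV)]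
      simp [this]
    · intro hmem
      by_cases hvV : v - 1 ∈ Vs
      · rw [if_pos hvV] at hmem
        simp only [Finset.mem_singleton] at hmem
        subst hmem
        exact ⟨⟨hvV, by omega⟩, v, ⟨hv, le_rfl⟩, rfl⟩
      · rw [if_neg hvV] at hmem; simp at hmem
  have hUcard : (A ∪ B).card + (if v - 1 ∈ Vs then 1 else 0) = Vs.card + 1 := by
    have h1 := Finset.card_union_add_card_inter A B
    rw [hABint] at h1
    by_cases hvV : v - 1 ∈ Vs
    · rw [if_pos hvV] at h1 ⊢; simp at h1; omega
    · rw [if_neg hvV] at h1 ⊢; simp at h1; omega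
  -- now the final filter
  have hVstep := step_V hr hi hv
  rw [← hVs, ← hCs, ← hA, ← hB] at hVstep
  set F := (A ∪ B).filter (fun w => 1 ≤ w ∧ w ≤ d (i+1) - 1) with hF
  set J := (A ∪ B).filter (fun w => ¬ (1 ≤ w ∧ w ≤ d (i+1) - 1)) with hJ
  have hFJ : F.card + J.card = (A ∪ B).card :=
    Finset.card_filter_add_card_filter_not _
  -- membership facts about A ∪ B elements
  have hmemA : ∀ w ∈ A, 1 ≤ w ∧ w ≤ d i - 1 ∧ w < v := by
    intro w hw
    obtain ⟨hwV, hwlt⟩ := Finset.mem_filter.1 hw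
    obtain ⟨_, h1, h2⟩ := mem_Vd.1 hwV
    exact ⟨h1, h2, by simpa using hwlt⟩
  have hmemB : ∀ w ∈ B, v - 1 ≤ w ∧ w ≤ d i - 1 := by
    intro w hw
    obtain ⟨u, hu, huw⟩ := Finset.mem_image.1 hw
    obtain ⟨huC, huge⟩ := Finset.mem_filter.1 hu
    obtain ⟨_, h1, h2⟩ := mem_Cd.1 huC
    constructor <;> [skip; omega]
    have : v ≤ u := by simpa using huge
    omega
  have htopB : d i - 1 ∈ B := by
    rw [hB]
    exact Finset.mem_image.2 ⟨d i, Finset.mem_filter.2 ⟨hCins ▸ Finset.mem_insert_self _ _, by simpa using hvd⟩, rfl⟩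
  have hzeroAB : (0:ℤ) ∈ A ∪ B ↔ v = 1 := by
    constructor
    · intro h
      rcases Finset.mem_union.1 h with h | h
      · have := hmemA 0 h; omega
      · have := hmemB 0 h
        obtain ⟨u, hu, huw⟩ := Finset.mem_image.1 h
        obtain ⟨huC, huge⟩ := Finset.mem_filter.1 hu
        obtain ⟨_, h1, _⟩ := mem_Cd.1 huC
        have : v ≤ u := by simpa using huge
        omega
    · intro h
      subst h
      exact Finset.mem_union_right _ (Finset.mem_image.2 ⟨1, Finset.mem_filter.2 ⟨hv, by simp⟩, by norm_num⟩)
  have hvV01 : (v - 1 ∈ insert 0 Vs) ↔ (v = 1 ∨ v - 1 ∈ Vs) := by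
    simp only [Finset.mem_insert]
    constructor
    · rintro (h | h)
      · left; omega
      · right; exact h
    · rintro (h | h)
      · left; omega
      · right; exact h
  have hv1notV : v = 1 → v - 1 ∉ Vs := by
    intro h hmem
    obtain ⟨_, h1, _⟩ := mem_Vd.1 hmem
    omega
  -- compute J in the two cases
  rcases hcase with hup | hdown
  · -- up case : J = if v = 1 then {0} else ∅
    have hJeq : J = if v = 1 then {(0:ℤ)} else ∅ := by
      ext w
      rw [hJ, Finset.mem_filter]
      constructor
      · rintro ⟨hw, hbad⟩
        have hwrange : w ≤ d i - 1 := by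
          rcases Finset.mem_union.1 hw with h | h
          · exact (hmemA w h).2.1
          · exact (hmemB w h).2
        have hwlo : v - 1 ≤ w ∨ 1 ≤ w := by
          rcases Finset.mem_union.1 hw with h | h
          · exact Or.inr (hmemA w h).1
          · exact Or.inl (hmemB w h).1
        have hw0 : w = 0 := by omega
        subst hw0
        have hv1 : v = 1 := hzeroAB.1 hw
        rw [if_pos hv1]; simp
      · intro hmem
        by_cases hv1 : v = 1
        · rw [if_pos hv1] at hmem
          simp only [Finset.mem_singleton] at hmem
          subst hmem
          exact ⟨hzeroAB.2 hv1, by omega⟩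
        · rw [if_neg hv1] at hmem; simp at hmem
    rw [if_pos hup]
    rw [hJeq] at hFJ
    rw [hVstep]
    by_cases hv1 : v = 1
    · rw [if_pos hv1] at hFJ
      rw [if_pos (hvV01.2 (Or.inl hv1))]
      have h0 : v - 1 ∈ Vs → False := hv1notV hv1
      rw [if_neg (by intro h; exact h0 h)] at hUcard
      simp only [Finset.card_singleton] at hFJ
      push_cast
      omega
    · rw [if_neg hv1] at hFJ
      simp only [Finset.card_empty] at hFJ
      by_cases hvV : v - 1 ∈ Vs
      · rw [if_pos (hvV01.2 (Or.inr hvV))]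
        rw [if_pos hvV] at hUcard
        push_cast; omega
      · rw [if_neg (by rw [hvV01]; push_neg; exact ⟨hv1, hvV⟩)]
        rw [if_neg hvV] at hUcard
        push_cast; omega
  · -- down case : J = if v = 1 then {0, d i - 1} else {d i - 1}
    have hd2 : 2 ≤ d i := by omega
    have hJeq : J = if v = 1 then {(0:ℤ), d i - 1} else {d i - 1} := by
      ext w
      rw [hJ, Finset.mem_filter]
      constructor
      · rintro ⟨hw, hbad⟩
        have hwrange : w ≤ d i - 1 := by
          rcases Finset.mem_union.1 hw with h | h
          · exact (hmemA w h).2.1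
          · exact (hmemB w h).2
        have hwlo : v - 1 ≤ w ∨ 1 ≤ w := by
          rcases Finset.mem_union.1 hw with h | h
          · exact Or.inr (hmemA w h).1
          · exact Or.inl (hmemB w h).1
        have hw0 : w = 0 ∨ w = d i - 1 := by omega
        rcases hw0 with hw0 | hw0
        · subst hw0
          have hv1 : v = 1 := hzeroAB.1 hw
          rw [if_pos hv1]; simp
        · subst hw0
          split <;> simp
      · intro hmem
        have hdimem : (d i - 1) ∈ A ∪ B := Finset.mem_union_right _ htopB
        by_cases hv1 : v = 1
        · rw [if_pos hv1] at hmem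
          simp only [Finset.mem_insert, Finset.mem_singleton] at hmem
          rcases hmem with h | h
          · subst h
            exact ⟨hzeroAB.2 hv1, by omega⟩
          · subst h
            exact ⟨hdimem, by omega⟩
        · rw [if_neg hv1] at hmem
          simp only [Finset.mem_singleton] at hmem
          subst hmem
          exact ⟨hdimem, by omega⟩
    rw [if_neg (by omega)]
    rw [hJeq] at hFJ
    rw [hVstep]
    by_cases hv1 : v = 1
    · rw [if_pos hv1] at hFJ
      rw [if_pos (hvV01.2 (Or.inl hv1))]
      rw [if_neg (by intro h; exact hv1notV hv1 h)] at hUcard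
      have hcard2 : ({(0:ℤ), d i - 1} : Finset ℤ).card = 2 := by
        rw [Finset.card_insert_of_notMem (by simp; omega), Finset.card_singleton]
      rw [hcard2] at hFJ
      push_cast
      omega
    · rw [if_neg hv1] at hFJ
      simp only [Finset.card_singleton] at hFJ
      by_cases hvV : v - 1 ∈ Vs
      · rw [if_pos (hvV01.2 (Or.inr hvV))]
        rw [if_pos hvV] at hUcard
        push_cast; omega
      · rw [if_neg (by rw [hvV01]; push_neg; exact ⟨hv1, hvV⟩)]
        rw [if_neg hvV] at hUcard
        push_cast; omega

end
end FMaux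

namespace FMaux
section
variable {d : ℤ → ℤ} {i : ℤ} {r : ℤ → ℤ}

lemma M_sum (hr : ValidRow d i r) (hi : 0 ≤ i) (hdi : 1 ≤ d i) :
    ∑ v ∈ Cd d i r, (if v - 1 ∈ insert 0 (Vd d i r) then (1:ℤ) else 0)
      = 2 * (Vd d i r).card + 2 - d i := by
  classical
  set S : Finset ℤ := insert 0 (Cd d i r) with hS
  have hmemS : ∀ w : ℤ, w ∈ S ↔ (w = 0 ∨ (∃ k, 0 ≤ k ∧ k ≤ i ∧ r k = w) ∧ 1 ≤ w ∧ w ≤ d i) := by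
    intro w; simp [hS, mem_Cd]
  have h1 : ∀ v ∈ Cd d i r, (v - 1 ∈ insert 0 (Vd d i r)) ↔ v - 1 ∈ S := by
    intro v hv
    obtain ⟨hh, h1, h2⟩ := mem_Cd.1 hv
    simp only [Finset.mem_insert, hmemS, mem_Vd, mem_Cd]
    constructor
    · rintro (h | ⟨hh2, ha, hb⟩)
      · exact Or.inl h
      · exact Or.inr ⟨hh2, ha, by omega⟩
    · rintro (h | ⟨hh2, ha, hb⟩)
      · exact Or.inl h
      · exact Or.inr ⟨hh2, ha, by omega⟩
  rw [Finset.sum_congr rfl (fun v hv => by rw [if_congr (h1 v hv) rfl rfl])]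
  have h2 : Cd d i r = (Finset.Icc 1 (d i)).filter (· ∈ S) := by
    ext u
    simp only [mem_Cd, Finset.mem_filter, Finset.mem_Icc, hmemS]
    constructor
    · rintro ⟨hh, ha, hb⟩
      exact ⟨⟨ha, hb⟩, Or.inr ⟨hh, ha, hb⟩⟩
    · rintro ⟨⟨ha, hb⟩, h | ⟨hh, _, _⟩⟩
      · omega
      · exact ⟨hh, ha, hb⟩
  have h3 : insert 0 (Vd d i r) = (Finset.Icc 0 (d i - 1)).filter (· ∈ S) := by
    ext w
    simp only [Finset.mem_insert, mem_Vd, Finset.mem_filter, Finset.mem_Icc, hmemS]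
    constructor
    · rintro (h | ⟨hh, ha, hb⟩)
      · exact ⟨by omega, Or.inl h⟩
      · exact ⟨by omega, Or.inr ⟨hh, ha, by omega⟩⟩
    · rintro ⟨⟨ha, hb⟩, h | ⟨hh, hc, hdd⟩⟩
      · exact Or.inl h
      · exact Or.inr ⟨hh, hc, by omega⟩
  have hsp : ∀ v : ℤ, 1 ≤ v → v ≤ d i → v ∈ S ∨ v - 1 ∈ S := by
    intro v ha hb
    rcases hr.sparse (v-1) (by omega) (by omega) with (h | ⟨k, hk0, hki, hk⟩) | ⟨k, hk0, hki, hk⟩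
    · exact Or.inr ((hmemS _).2 (Or.inl h))
    · by_cases hv1 : v = 1
      · exact Or.inr ((hmemS _).2 (Or.inl (by omega)))
      · exact Or.inr ((hmemS _).2 (Or.inr ⟨⟨k, hk0, hki, hk⟩, by omega, by omega⟩))
    · exact Or.inl ((hmemS _).2 (Or.inr ⟨⟨k, hk0, hki, by omega⟩, by omega, by omega⟩))
  -- rewrite the sum over Cd as a sum over Icc 1 (d i)
  have h4 : ∑ v ∈ Cd d i r, (if v - 1 ∈ S then (1:ℤ) else 0)
      = ∑ v ∈ Finset.Icc 1 (d i), (if v ∈ S then (if v - 1 ∈ S then (1:ℤ) else 0) else 0) := by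
    rw [h2, Finset.sum_filter]
  rw [h4]
  have h5 : ∀ v ∈ Finset.Icc 1 (d i),
      (if v ∈ S then (if v - 1 ∈ S then (1:ℤ) else 0) else 0)
        = (if v ∈ S then (1:ℤ) else 0) + (if v - 1 ∈ S then (1:ℤ) else 0) - 1 := by
    intro v hv
    obtain ⟨ha, hb⟩ := Finset.mem_Icc.1 hv
    have hor := hsp v ha hb
    by_cases h' : v ∈ S <;> by_cases h'' : v - 1 ∈ S
    · simp [h', h'']
    · simp [h', h'']
    · simp [h', h'']
    · exact absurd hor (by tauto)
  rw [Finset.sum_congr rfl h5]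
  rw [Finset.sum_sub_distrib, Finset.sum_add_distrib]
  have hcard1 : ∑ v ∈ Finset.Icc 1 (d i), (if v ∈ S then (1:ℤ) else 0)
      = ((Cd d i r).card : ℤ) := by
    rw [h2, Finset.sum_ite_mem, Finset.filter_mem_eq_inter]
    simp
  have hshift : ∑ v ∈ Finset.Icc 1 (d i), (if v - 1 ∈ S then (1:ℤ) else 0)
      = ∑ w ∈ Finset.Icc 0 (d i - 1), (if w ∈ S then (1:ℤ) else 0) := by
    have hmap : Finset.Icc (1:ℤ) (d i) = (Finset.Icc 0 (d i - 1)).map (addRightEmbedding 1) := by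
      rw [Finset.map_add_right_Icc]; norm_num
    rw [hmap, Finset.sum_map]
    apply Finset.sum_congr rfl
    intro w _
    simp [addRightEmbedding]
  have h0V : (0:ℤ) ∉ Vd d i r := by
    intro h
    have := (mem_Vd.1 h).2.1; omega
  have hcard2 : ∑ w ∈ Finset.Icc 0 (d i - 1), (if w ∈ S then (1:ℤ) else 0)
      = ((Vd d i r).card : ℤ) + 1 := by
    rw [Finset.sum_ite_mem]
    have h6 : Finset.Icc 0 (d i - 1) ∩ S = insert 0 (Vd d i r) := by
      rw [h3, Finset.filter_mem_eq_inter]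
    rw [h6, Finset.sum_const, Finset.card_insert_of_notMem h0V, nsmul_eq_mul, mul_one]
    push_cast; ring
  rw [hcard1, hshift, hcard2]
  have hCdcard : (Cd d i r).card = (Vd d i r).card + 1 := by
    rw [Cd_eq_insert hr hi hdi, Finset.card_insert_of_notMem di_notmem_Vd]
  have hIcc : ∑ _v ∈ Finset.Icc 1 (d i), (1:ℤ) = d i := by
    rw [Finset.sum_const, nsmul_eq_mul, mul_one, Int.card_Icc]
    omega
  rw [hCdcard, hIcc]
  push_cast; ring

end
end FMaux

namespace FMaux
section
variable {d : ℤ → ℤ} {i : ℤ} {r : ℤ → ℤ}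

lemma sum_step (hr : ValidRow d i r) (hi : 0 ≤ i) (hdi : 1 ≤ d i) (hd1 : 1 ≤ d (i+1))
    (hcase : d (i+1) = d i + 1 ∨ d (i+1) = d i - 1) :
    (if d (i+1) = d i + 1 then 1 else 2) *
        ∑ v ∈ Cd d i r, (2:ℤ)^((Vd d (i+1) (stepRow d i r v)).card)
      = d i * 2^((Vd d i r).card) := by
  classical
  set k := (Vd d i r).card with hk
  have hpt : ∀ v ∈ Cd d i r,
      (if d (i+1) = d i + 1 then (1:ℤ) else 2) * (2:ℤ)^((Vd d (i+1) (stepRow d i r v)).card)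
        = 2 * 2^k - (if v - 1 ∈ insert 0 (Vd d i r) then (1:ℤ) else 0) * 2^k := by
    intro v hv
    have hc := card_step hr hi hv hd1 hcase
    by_cases hup : d (i+1) = d i + 1
    · rw [if_pos hup] at hc ⊢
      by_cases hg : v - 1 ∈ insert 0 (Vd d i r)
      · rw [if_pos hg] at hc ⊢
        have hck : (Vd d (i+1) (stepRow d i r v)).card = k := by omega
        rw [hck]; ring
      · rw [if_neg hg] at hc ⊢
        have hck : (Vd d (i+1) (stepRow d i r v)).card = k + 1 := by omega
        rw [hck, pow_succ]; ring
    · rw [if_neg hup] at hc ⊢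
      by_cases hg : v - 1 ∈ insert 0 (Vd d i r)
      · rw [if_pos hg] at hc ⊢
        have hck : k = (Vd d (i+1) (stepRow d i r v)).card + 1 := by omega
        rw [hck, pow_succ]; ring
      · rw [if_neg hg] at hc ⊢
        have hck : (Vd d (i+1) (stepRow d i r v)).card = k := by omega
        rw [hck]; ring
  rw [Finset.mul_sum, Finset.sum_congr rfl hpt, Finset.sum_sub_distrib, Finset.sum_const,
    ← Finset.sum_mul, M_sum hr hi hdi]
  have hCdcard : (Cd d i r).card = k + 1 := by
    rw [hk, Cd_eq_insert hr hi hdi, Finset.card_insert_of_notMem di_notmem_Vd]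
  rw [hCdcard, nsmul_eq_mul]
  push_cast
  ring

end
end FMaux

namespace FMaux
section
variable {d : ℤ → ℤ} {m i : ℤ} {r : ℤ → ℤ}

def ExtSet (d : ℤ → ℤ) (m i : ℤ) (r : ℤ → ℤ) : Set (ℤ → ℤ → ℤ) :=
  {F | (∀ j, j < i ∨ m < j → ∀ k, F j k = 0) ∧ F i = r ∧
       (∀ j, i + 1 ≤ j → j ≤ m → NextRow d (j-1) (F (j-1)) (F j))}

lemma ext_base : ExtSet d m m r = {fun j k => if j = m then r k else 0} := by
  ext F
  simp only [ExtSet, Set.mem_setOf_eq, Set.mem_singleton_iff]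
  constructor
  · rintro ⟨hz, hr, _⟩
    funext j k
    by_cases hj : j = m
    · subst hj; rw [if_pos rfl, hr]
    · rw [if_neg hj, hz j (by omega) k]
  · rintro rfl
    refine ⟨fun j hj k => ?_, ?_, fun j hj1 hj2 => by omega⟩
    · show (if j = m then r k else 0) = 0
      rw [if_neg (by omega)]
    · funext k
      show (if m = m then r k else 0) = r k
      rw [if_pos rfl]

lemma paste_mem (hm : i + 1 ≤ m) (hr : ValidRow d i r) (hi : 0 ≤ i)
    (hd1 : 1 ≤ d (i+1)) (hdd : d i - 1 ≤ d (i+1)) {v : ℤ} (hv : v ∈ Cd d i r)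
    {G : ℤ → ℤ → ℤ} (hG : G ∈ ExtSet d m (i+1) (stepRow d i r v)) :
    (fun j k => if j = i then r k else G j k) ∈ ExtSet d m i r := by
  obtain ⟨hz, hrow, hnext⟩ := hG
  refine ⟨?_, ?_, ?_⟩
  · intro j hj k
    show (if j = i then r k else G j k) = 0
    rw [if_neg (by omega), hz j (by omega) k]
  · funext k
    show (if i = i then r k else G i k) = r k
    rw [if_pos rfl]
  · intro j hj1 hj2
    by_cases hji : j = i + 1
    · subst hji
      have e1 : (fun k => if i + 1 - 1 = i then r k else G (i+1-1) k) = r := by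
        funext k; rw [if_pos (by omega)]
      have e2 : (fun k => if i + 1 = i then r k else G (i+1) k) = stepRow d i r v := by
        funext k; rw [if_neg (by omega), hrow]
      show NextRow d (i+1-1) (fun k => if i + 1 - 1 = i then r k else G (i+1-1) k)
        (fun k => if i + 1 = i then r k else G (i+1) k)
      rw [e1, e2, show i + 1 - 1 = i by omega]
      exact step_is_next hr hi hd1 hdd hv
    · have h1 : (fun k => if j - 1 = i then r k else G (j-1) k) = G (j-1) := by
        funext k; rw [if_neg (by omega)]
      have h2 : (fun k => if j = i then r k else G j k) = G j := by
        funext k; rw [if_neg (by omega)]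
      show NextRow d (j-1) (fun k => if j - 1 = i then r k else G (j-1) k)
        (fun k => if j = i then r k else G j k)
      rw [h1, h2]
      exact hnext j (by omega) hj2

lemma ext_card_step (hm : i + 1 ≤ m) (hr : ValidRow d i r) (hi : 0 ≤ i)
    (hd1 : 1 ≤ d (i+1)) (hdd : d i - 1 ≤ d (i+1))
    (hfin : ∀ v ∈ Cd d i r, (ExtSet d m (i+1) (stepRow d i r v)).Finite) :
    (ExtSet d m i r).Finite ∧
      Nat.card (ExtSet d m i r)
        = ∑ v ∈ Cd d i r, Nat.card (ExtSet d m (i+1) (stepRow d i r v)) := by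
  classical
  have hbij : Function.Bijective
      (fun x : (Σ v : {v // v ∈ Cd d i r}, ↥(ExtSet d m (i+1) (stepRow d i r v.1))) =>
        (⟨fun j k => if j = i then r k else x.2.1 j k,
          paste_mem hm hr hi hd1 hdd x.1.2 x.2.2⟩ : ↥(ExtSet d m i r))) := by
    constructor
    · rintro ⟨v, G⟩ ⟨v', G'⟩ heq
      have heq' := congrArg Subtype.val heq
      simp only at heq'
      have hrow : G.1 (i+1) = G'.1 (i+1) := by
        funext k
        have h := congrFun (congrFun heq' (i+1)) k
        rwa [if_neg (by omega), if_neg (by omega)] at h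
      have hv : v = v' := by
        apply Subtype.ext
        apply step_inj hr hi v.2 v'.2
        rw [← G.2.2.1, ← G'.2.2.1, hrow]
      subst hv
      have hG : G = G' := by
        apply Subtype.ext
        funext j k
        by_cases hj : j = i
        · rw [G.2.1 j (by omega) k, G'.2.1 j (by omega) k]
        · have h := congrFun (congrFun heq' j) k
          rwa [if_neg hj, if_neg hj] at h
      rw [hG]
    · rintro ⟨F, hz, hrow, hnext⟩
      have hn1 := hnext (i+1) (by omega) hm
      rw [show i + 1 - 1 = i by omega, hrow] at hn1
      obtain ⟨v, hv, hFv⟩ := next_is_step hr hi hn1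
      have hGmem : (fun j k => if j = i then (0:ℤ) else F j k)
          ∈ ExtSet d m (i+1) (stepRow d i r v) := by
        refine ⟨?_, ?_, ?_⟩
        · intro j hj k
          show (if j = i then (0:ℤ) else F j k) = 0
          by_cases hji : j = i
          · rw [if_pos hji]
          · rw [if_neg hji, hz j (by omega) k]
        · funext k
          show (if i + 1 = i then (0:ℤ) else F (i+1) k) = stepRow d i r v k
          rw [if_neg (by omega), ← hFv]
        · intro j hj1 hj2
          have h1 : (fun k => if j - 1 = i then (0:ℤ) else F (j-1) k) = F (j-1) := by
            funext k; rw [if_neg (by omega)]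
          have h2 : (fun k => if j = i then (0:ℤ) else F j k) = F j := by
            funext k; rw [if_neg (by omega)]
          show NextRow d (j-1) (fun k => if j - 1 = i then (0:ℤ) else F (j-1) k)
            (fun k => if j = i then (0:ℤ) else F j k)
          rw [h1, h2]
          exact hnext j (by omega) hj2
      refine ⟨⟨⟨v, hv⟩, ⟨_, hGmem⟩⟩, ?_⟩
      apply Subtype.ext
      funext j k
      show (if j = i then r k else if j = i then (0:ℤ) else F j k) = F j k
      by_cases hj : j = i
      · subst hj
        rw [if_pos rfl, hrow]
      · rw [if_neg hj, if_neg hj]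
  haveI hfin' : ∀ v : {v // v ∈ Cd d i r}, Finite ↥(ExtSet d m (i+1) (stepRow d i r v.1)) :=
    fun v => (hfin v.1 v.2).to_subtype
  haveI : Finite {v // v ∈ Cd d i r} := Finite.of_fintype _
  have e := Equiv.ofBijective _ hbij
  haveI hfinT : Finite (Σ v : {v // v ∈ Cd d i r}, ↥(ExtSet d m (i+1) (stepRow d i r v.1))) :=
    Finite.instSigma
  have hfinE : Finite ↥(ExtSet d m i r) := Finite.of_equiv _ e
  refine ⟨hfinE, ?_⟩
  haveI : ∀ v : {v // v ∈ Cd d i r}, Fintype ↥(ExtSet d m (i+1) (stepRow d i r v.1)) :=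
    fun v => Fintype.ofFinite _
  rw [← Nat.card_congr e, Nat.card_eq_fintype_card, Fintype.card_sigma]
  have h1 : ∀ v : {v // v ∈ Cd d i r},
      Fintype.card ↥(ExtSet d m (i+1) (stepRow d i r v.1))
        = Nat.card (ExtSet d m (i+1) (stepRow d i r v.1)) :=
    fun v => (Nat.card_eq_fintype_card).symm
  rw [Finset.sum_congr rfl (fun v _ => h1 v)]
  exact Finset.sum_coe_sort (Cd d i r) (fun v => Nat.card (ExtSet d m (i+1) (stepRow d i r v)))

end
end FMaux

namespace FMaux
section
variable {d : ℤ → ℤ} {m : ℤ}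

noncomputable def downs (d : ℤ → ℤ) (m i : ℤ) : ℕ :=
  ((Finset.Ioc i m).filter (fun k => d k = d (k-1) - 1)).card

lemma ext_count (hdpos : ∀ k, 0 ≤ k → k ≤ m → 1 ≤ d k)
    (hstepd : ∀ k, 1 ≤ k → k ≤ m → d k = d (k-1) + 1 ∨ d k = d (k-1) - 1)
    (hlast : d m = 1) :
    ∀ q : ℕ, ∀ i : ℤ, 0 ≤ i → i + q = m → ∀ r, ValidRow d i r →
      (ExtSet d m i r).Finite ∧
      (Nat.card (ExtSet d m i r) : ℤ) * 2 ^ (downs d m i) =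
        (∏ k ∈ Finset.Ico i m, d k) * 2 ^ ((Vd d i r).card) := by
  intro q
  induction q with
  | zero =>
      intro i hi0 hiq r hr
      have him : i = m := by push_cast at hiq; omega
      subst him
      rw [ext_base]
      refine ⟨Set.finite_singleton _, ?_⟩
      have hV : Vd d i r = ∅ := by
        apply Finset.eq_empty_of_forall_notMem
        intro w hw
        obtain ⟨_, h1, h2⟩ := mem_Vd.1 hw
        omega
      have hdn : downs d i i = 0 := by
        unfold downs
        rw [Finset.Ioc_self, Finset.filter_empty, Finset.card_empty]
      rw [hV, hdn, Finset.Ico_self, Finset.prod_empty, Finset.card_empty,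
        Nat.card_coe_set_eq, Set.ncard_singleton]
      norm_num
  | succ p ih =>
      intro i hi0 hiq r hr
      have him : i + 1 ≤ m := by push_cast at hiq; omega
      have hd1 : 1 ≤ d (i+1) := hdpos _ (by omega) (by omega)
      have hdi : 1 ≤ d i := hdpos _ (by omega) (by omega)
      have hcase : d (i+1) = d i + 1 ∨ d (i+1) = d i - 1 := by
        have h := hstepd (i+1) (by omega) (by omega)
        rwa [show i + 1 - 1 = i by omega] at h
      have hdd : d i - 1 ≤ d (i+1) := by omega
      have hdd2 : d (i+1) ≤ d i + 1 := by omega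
      have hIH : ∀ v ∈ Cd d i r,
          (ExtSet d m (i+1) (stepRow d i r v)).Finite ∧
          (Nat.card (ExtSet d m (i+1) (stepRow d i r v)) : ℤ) * 2 ^ (downs d m (i+1)) =
            (∏ k ∈ Finset.Ico (i+1) m, d k) * 2 ^ ((Vd d (i+1) (stepRow d i r v)).card) :=
        fun v hv => ih (i+1) (by omega) (by push_cast at hiq ⊢; omega) _
          (step_valid hr hi0 hd1 hdd hdd2 hv)
      obtain ⟨hfin, hcard⟩ := ext_card_step him hr hi0 hd1 hdd (fun v hv => (hIH v hv).1)
      refine ⟨hfin, ?_⟩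
      have hnotmem : (i+1) ∉ Finset.Ioc (i+1) m := by simp
      have hIoc : Finset.Ioc i m = insert (i+1) (Finset.Ioc (i+1) m) := by
        ext x
        simp only [Finset.mem_Ioc, Finset.mem_insert]
        omega
      have e1 : i + 1 - 1 = i := by omega
      have hdowns : downs d m i = (if d (i+1) = d i - 1 then 1 else 0) + downs d m (i+1) := by
        unfold downs
        rw [hIoc, Finset.filter_insert]
        by_cases hdn : d (i+1) = d i - 1
        · rw [if_pos (by rw [e1]; exact hdn), Finset.card_insert_of_notMem
            (fun hmem => hnotmem (Finset.mem_of_mem_filter _ hmem)), if_pos hdn]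
          omega
        · rw [if_neg (fun h => hdn (by rwa [e1] at h)), if_neg hdn]
          omega
      have hInotmem : i ∉ Finset.Ico (i+1) m := by simp
      have hIco : Finset.Ico i m = insert i (Finset.Ico (i+1) m) := by
        ext x
        simp only [Finset.mem_Ico, Finset.mem_insert]
        omega
      have hprod : ∏ k ∈ Finset.Ico i m, d k = d i * ∏ k ∈ Finset.Ico (i+1) m, d k := by
        rw [hIco, Finset.prod_insert hInotmem]
      have hsum2 := sum_step hr hi0 hdi hd1 hcase
      set P := ∏ k ∈ Finset.Ico (i+1) m, d k with hP
      set SB := ∑ v ∈ Cd d i r, (2:ℤ)^((Vd d (i+1) (stepRow d i r v)).card) with hSB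
      have hSA : (Nat.card (ExtSet d m i r) : ℤ)
          = ∑ v ∈ Cd d i r, (Nat.card (ExtSet d m (i+1) (stepRow d i r v)) : ℤ) := by
        rw [hcard]; push_cast; rfl
      have hterm : (∑ v ∈ Cd d i r, (Nat.card (ExtSet d m (i+1) (stepRow d i r v)) : ℤ))
          * 2 ^ (downs d m (i+1)) = P * SB := by
        rw [Finset.sum_mul, Finset.sum_congr rfl (fun v hv => (hIH v hv).2), ← Finset.mul_sum]
      rw [hSA, hdowns, hprod]
      rcases hcase with hup | hdown
      · rw [if_neg (show ¬ d (i+1) = d i - 1 by omega), zero_add, hterm]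
        rw [if_pos hup, one_mul] at hsum2
        rw [hsum2]; ring
      · rw [if_pos hdown, pow_add, pow_one]
        have hre : (∑ v ∈ Cd d i r, (Nat.card (ExtSet d m (i+1) (stepRow d i r v)) : ℤ))
            * (2 * 2 ^ (downs d m (i+1)))
            = ((∑ v ∈ Cd d i r, (Nat.card (ExtSet d m (i+1) (stepRow d i r v)) : ℤ))
              * 2 ^ (downs d m (i+1))) * 2 := by ring
        rw [hre, hterm]
        rw [if_neg (show ¬ d (i+1) = d i + 1 by omega)] at hsum2
        calc P * SB * 2 = P * (2 * SB) := by ring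
        _ = P * (d i * 2 ^ ((Vd d i r).card)) := by rw [hsum2]
        _ = d i * P * 2 ^ ((Vd d i r).card) := by ring

end
end FMaux

namespace FMaux
section
variable {d : ℤ → ℤ} {m : ℤ}

lemma downs_eq (hstepd : ∀ k, 1 ≤ k → k ≤ m → d k = d (k-1) + 1 ∨ d k = d (k-1) - 1) :
    ∀ q : ℕ, ∀ i : ℤ, 0 ≤ i → i + q = m → 2 * (downs d m i : ℤ) = q - d m + d i := by
  intro q
  induction q with
  | zero =>
      intro i hi0 hiq
      have him : i = m := by push_cast at hiq; omega
      subst him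
      unfold downs
      rw [Finset.Ioc_self, Finset.filter_empty, Finset.card_empty]
      push_cast; ring
  | succ p ih =>
      intro i hi0 hiq
      have him : i + 1 ≤ m := by push_cast at hiq; omega
      have hcase : d (i+1) = d i + 1 ∨ d (i+1) = d i - 1 := by
        have h := hstepd (i+1) (by omega) (by omega)
        rwa [show i + 1 - 1 = i by omega] at h
      have hIH := ih (i+1) (by omega) (by push_cast at hiq ⊢; omega)
      have hnotmem : (i+1) ∉ Finset.Ioc (i+1) m := by simp
      have hIoc : Finset.Ioc i m = insert (i+1) (Finset.Ioc (i+1) m) := by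
        ext x
        simp only [Finset.mem_Ioc, Finset.mem_insert]
        omega
      have e1 : i + 1 - 1 = i := by omega
      have hdowns : downs d m i = (if d (i+1) = d i - 1 then 1 else 0) + downs d m (i+1) := by
        unfold downs
        rw [hIoc, Finset.filter_insert]
        by_cases hdn : d (i+1) = d i - 1
        · rw [if_pos (by rw [e1]; exact hdn), Finset.card_insert_of_notMem
            (fun hmem => hnotmem (Finset.mem_of_mem_filter _ hmem)), if_pos hdn]
          omega
        · rw [if_neg (fun h => hdn (by rwa [e1] at h)), if_neg hdn]
          omega
      rw [hdowns]
      rcases hcase with h | h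
      · rw [if_neg (by omega)]
        push_cast
        push_cast at hIH
        omega
      · rw [if_pos h]
        push_cast
        push_cast at hIH
        omega

end
end FMaux

namespace FMaux

def r0 : ℤ → ℤ := fun k => if k = 0 then 2 else 0

lemma bridge {n : ℕ} {d : ℤ → ℤ} (hn : 2 ≤ n)
    (hpos : ∀ k : ℤ, 0 ≤ k → k ≤ 2 * (n : ℤ) - 3 → 0 < d k)
    (h0 : d 0 = 2)
    (hstepd : ∀ k, 1 ≤ k → k ≤ 2 * (n : ℤ) - 3 → d k = d (k-1) + 1 ∨ d k = d (k-1) - 1)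
    (hlast : d (2 * (n : ℤ) - 3) = 1)
    (F : ℤ → ℤ → ℤ) :
    (IsFMatrix n F ∧ ∀ k : ℤ, 0 ≤ k → k ≤ 2 * (n : ℤ) - 3 → F k k = d k)
      ↔ F ∈ ExtSet d (2 * (n : ℤ) - 3) 0 r0 := by
  set m : ℤ := 2 * (n : ℤ) - 3 with hm
  have hm1 : 1 ≤ m := by omega
  constructor
  · rintro ⟨hF, hdiag⟩
    refine ⟨?_, ?_, ?_⟩
    · intro j hj k
      rcases lt_or_ge k 0 with hk | hk
      · exact hF.zero_outside j k (Or.inl hk)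
      · rcases hj with hj | hj
        · exact hF.zero_outside j k (Or.inr (Or.inl (by omega)))
        · exact hF.zero_outside j k (Or.inr (Or.inr hj))
    · funext k
      show F 0 k = if k = 0 then 2 else 0
      by_cases hk : k = 0
      · rw [if_pos hk, hk]; exact hF.diag_first
      · rw [if_neg hk]
        rcases lt_or_ge k 0 with h | h
        · exact hF.zero_outside 0 k (Or.inl h)
        · exact hF.zero_outside 0 k (Or.inr (Or.inl (by omega)))
    · intro j hj1 hj2
      have e1 : j - 1 + 1 = j := by omega
      constructor
      · intro k hk
        rcases hk with hk | hk
        · exact hF.zero_outside j k (Or.inl hk)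
        · exact hF.zero_outside j k (Or.inr (Or.inl (by omega)))
      · exact fun k => hF.nonneg j k
      · intro k hk1 hk2
        exact hF.row_mono j k hk1 (by omega) hj2
      · intro k hk0 hk1
        exact ⟨hF.col_lb j k hk0 (by omega) hj2, hF.col_ub j k hk0 (by omega) hj2⟩
      · rw [e1]
        exact hdiag j (by omega) hj2
      · have h1 := hF.subdiag j hj1 hj2
        have h2 := hdiag (j-1) (by omega) (by omega)
        rw [h1, h2]
      · intro j' hj'1 hj'2
        exact ⟨hF.inner_lb j j' (by omega) hj2 hj'1 (by omega),
          hF.inner_ub j j' (by omega) hj2 hj'1 (by omega)⟩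
  · rintro ⟨hz, hr0, hnext⟩
    have hFdiag : ∀ k : ℤ, 0 ≤ k → k ≤ m → F k k = d k := by
      intro k hk0 hkm
      rcases eq_or_lt_of_le hk0 with hk | hk
      · have := congrFun hr0 0
        rw [show F 0 = F (-0) by norm_num] at this
        simp only [neg_zero] at this
        rw [← hk, this]
        show r0 0 = d 0
        rw [h0]; rfl
      · have h := (hnext k (by omega) hkm).diag
        rwa [show k - 1 + 1 = k by omega] at h
    have hrowzero : ∀ j k : ℤ, (k < 0 ∨ j < k) → 0 ≤ j → j ≤ m → F j k = 0 := by
      intro j k hk hj0 hjm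
      rcases eq_or_lt_of_le hj0 with hj | hj
      · rw [← hj] at hk ⊢
        rw [congrFun hr0 k]
        show (if k = 0 then (2:ℤ) else 0) = 0
        rw [if_neg (by omega)]
      · exact (hnext j (by omega) hjm).zero k (by omega)
    have hnng : ∀ j k : ℤ, 0 ≤ F j k := by
      intro j k
      rcases lt_or_ge j 0 with hj | hj
      · rw [hz j (by omega) k]
      · rcases lt_or_ge m j with hj2 | hj2
        · rw [hz j (by omega) k]
        · rcases eq_or_lt_of_le hj with hj3 | hj3
          · rw [← hj3, congrFun hr0 k]
            show (0:ℤ) ≤ if k = 0 then 2 else 0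
            split <;> norm_num
          · exact (hnext j (by omega) hj2).nonneg k
    refine ⟨⟨hnng, ?_, ?_, ?_, ?_, ?_, ?_, ?_, ?_, ?_, ?_, ?_⟩, hFdiag⟩
    · intro i j hij
      rcases hij with h | h | h
      · rcases lt_or_ge i 0 with hi | hi
        · rw [hz i (by omega) j]
        · rcases lt_or_ge m i with hi2 | hi2
          · rw [hz i (by omega) j]
          · exact hrowzero i j (Or.inl h) hi hi2
      · rcases lt_or_ge i 0 with hi | hi
        · rw [hz i (by omega) j]
        · rcases lt_or_ge m i with hi2 | hi2
          · rw [hz i (by omega) j]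
          · exact hrowzero i j (Or.inr h) hi hi2
      · rw [hz i (by omega) j]
    · intro i j hj1 hji him
      have h := (hnext i (by omega) him).mono j hj1 (by omega)
      exact h
    · intro i j hj0 hji him
      exact ((hnext i (by omega) him).col j hj0 (by omega)).1
    · intro i j hj0 hji him
      exact ((hnext i (by omega) him).col j hj0 (by omega)).2
    · intro i hi0 him
      rw [hFdiag i hi0 him]
      exact hpos i hi0 him
    · have := hFdiag 0 le_rfl (by omega)
      rw [this, h0]
    · intro i hi0 him
      rw [hFdiag i (by omega) (by omega), hFdiag (i-1) (by omega) (by omega)]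
      rcases hstepd i (by omega) (by omega) with h | h
      · exact Or.inl h
      · exact Or.inr h
    · rw [hFdiag m (by omega) (le_refl m)]
      exact hlast
    · intro i hi1 him
      have h := (hnext i hi1 him).sub
      rw [h, hFdiag (i-1) (by omega) (by omega)]
    · intro i j hi2 him hj1 hj2
      exact ((hnext i (by omega) him).inner j hj1 (by omega)).1
    · intro i j hi2 him hj1 hj2
      exact ((hnext i (by omega) him).inner j hj1 (by omega)).2

end FMaux


/-- for any admissible diagonal `(d_0, …, d_{2n-3})`, the number of
F-matrices of size `2n-2` with that diagonal equals `(∏_k d_k) / 2^{n-1}`. -/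
theorem fmatrix_count_fixed_diagonal (n : ℕ) (hn : 2 ≤ n) (d : ℤ → ℤ)
    (hpos : ∀ k : ℤ, 0 ≤ k → k ≤ 2 * (n : ℤ) - 3 → 0 < d k)
    (h0 : d 0 = 2)
    (hlast : d (2 * (n : ℤ) - 3) = 1)
    (hstep : ∀ k : ℤ, 1 ≤ k → k ≤ 2 * (n : ℤ) - 3 → |d k - d (k - 1)| = 1) :
    (Nat.card {F : ℤ → ℤ → ℤ // IsFMatrix n F ∧
        ∀ k : ℤ, 0 ≤ k → k ≤ 2 * (n : ℤ) - 3 → F k k = d k} : ℤ) * 2 ^ (n - 1) =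
      ∏ k ∈ Finset.Icc (0 : ℤ) (2 * (n : ℤ) - 3), d k := by
  classical
  set m : ℤ := 2 * (n : ℤ) - 3 with hm
  have hm1 : 1 ≤ m := by omega
  have hstepd : ∀ k, 1 ≤ k → k ≤ m → d k = d (k-1) + 1 ∨ d k = d (k-1) - 1 := by
    intro k hk1 hkm
    have h := hstep k hk1 hkm
    rw [abs_eq (by norm_num)] at h
    omega
  have hdpos : ∀ k, 0 ≤ k → k ≤ m → 1 ≤ d k := fun k h1 h2 => hpos k h1 h2
  have hr0valid : FMaux.ValidRow d 0 FMaux.r0 := by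
    refine ⟨?_, ?_, ?_, ?_, ?_⟩
    · intro k hk
      show (if k = 0 then (2:ℤ) else 0) = 0
      rw [if_neg (by omega)]
    · intro k
      show (0:ℤ) ≤ if k = 0 then 2 else 0
      split <;> norm_num
    · intro k hk1 hk2; omega
    · show (if (0:ℤ) = 0 then (2:ℤ) else 0) = d 0
      rw [if_pos rfl, h0]
    · intro w hw0 hwd
      rw [h0] at hwd
      rcases eq_or_lt_of_le hw0 with h | h
      · exact Or.inl (Or.inl h.symm)
      · refine Or.inr ⟨0, le_rfl, le_rfl, ?_⟩
        show (if (0:ℤ) = 0 then (2:ℤ) else 0) = w + 1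
        rw [if_pos rfl]; omega
  obtain ⟨hfin, hcount⟩ := FMaux.ext_count hdpos hstepd hlast m.toNat 0 le_rfl (by omega)
    FMaux.r0 hr0valid
  have hV0 : FMaux.Vd d 0 FMaux.r0 = ∅ := by
    apply Finset.eq_empty_of_forall_notMem
    intro w hw
    obtain ⟨⟨k, hk0, hki, hk⟩, h1, h2⟩ := FMaux.mem_Vd.1 hw
    have hk' : k = 0 := by omega
    rw [hk'] at hk
    have : (if (0:ℤ) = 0 then (2:ℤ) else 0) = w := hk
    rw [if_pos rfl] at this
    rw [h0] at h2
    omega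
  have hdowns : FMaux.downs d m 0 = n - 1 := by
    have h := FMaux.downs_eq hstepd m.toNat 0 le_rfl (by omega)
    rw [hlast, h0] at h
    omega
  have hprodIcc : ∏ k ∈ Finset.Icc (0:ℤ) m, d k = ∏ k ∈ Finset.Ico (0:ℤ) m, d k := by
    have hmm : m ∉ Finset.Ico (0:ℤ) m := by simp
    have hIcc : Finset.Icc (0:ℤ) m = insert m (Finset.Ico (0:ℤ) m) := by
      ext x
      simp only [Finset.mem_Icc, Finset.mem_Ico, Finset.mem_insert]
      omega
    rw [hIcc, Finset.prod_insert hmm, hlast, one_mul]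
  have hcardEq : Nat.card {F : ℤ → ℤ → ℤ // IsFMatrix n F ∧
        ∀ k : ℤ, 0 ≤ k → k ≤ 2 * (n : ℤ) - 3 → F k k = d k}
      = Nat.card (FMaux.ExtSet d m 0 FMaux.r0) := by
    apply Nat.card_congr
    exact Equiv.subtypeEquivRight (FMaux.bridge hn hpos h0 hstepd hlast)
  rw [hcardEq, hprodIcc]
  rw [hV0, Finset.card_empty, pow_zero, mul_one] at hcount
  rw [hdowns] at hcount
  exact hcount
end
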